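/- arXiv:2002.08915 — 8 statements merged into one kernel-verified Lean document; each statement's English description precedes it below -/
import Mathlib

section
/- Let n ≥ 3 be an odd integer, m = (n+1)/2, and for an integer k let [k]_n = ((k−1) mod n) + 1 ∈ {1,…,n}. Define f(i,j) = (m−i)·(−1)^j + n(n−j) + m, and define the n×n integer matrix M by M_{i,j} = f((i+j)/2, (j−i)/2 + m) if i and j have the same parity, and M_{i,j} = f([(i+j+n)/2]_n, [(j−i+n)/2 + m]_n) otherwise. Then M is a normal magic square of subtraction of order n whose common residuum equals (n²+1)/2. -/
/-- Residuum of a finite sequence of integers: sort in decreasing order and take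
the alternating sum `x̃₁ - x̃₂ + x̃₃ - …`. -/
def res (l : List ℤ) : ℤ := (l.insertionSort (· ≥ ·)).alternatingSum

/-- The `i`-th row `(M i 1, …, M i n)` of an `n × n` matrix given with 1-based indices. -/
def rowList (n : ℕ) (M : ℕ → ℕ → ℤ) (i : ℕ) : List ℤ :=
  (List.range n).map fun j => M i (j + 1)

/-- The `j`-th column `(M 1 j, …, M n j)`. -/
def colList (n : ℕ) (M : ℕ → ℕ → ℤ) (j : ℕ) : List ℤ :=
  (List.range n).map fun i => M (i + 1) j

/-- The main diagonal `(M 1 1, …, M n n)`. -/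
def diagList (n : ℕ) (M : ℕ → ℕ → ℤ) : List ℤ :=
  (List.range n).map fun i => M (i + 1) (i + 1)

/-- The antidiagonal `(M 1 n, M 2 (n-1), …, M n 1)`, i.e. entries `M i (n+1-i)`. -/
def adiagList (n : ℕ) (M : ℕ → ℕ → ℤ) : List ℤ :=
  (List.range n).map fun i => M (i + 1) (n - i)

/-- `M` (on indices `1..n`) is a normal magic square of subtraction of order `n`
with residuum `r`: its entries are exactly the integers `1,…,n²`, each occurring
once, and every row, every column, the main diagonal and the antidiagonal all
have residuum `r`. -/
def IsMagicSubSquare (n : ℕ) (M : ℕ → ℕ → ℤ) (r : ℤ) : Prop :=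
  ((Finset.Icc 1 n ×ˢ Finset.Icc 1 n).val.map fun p => M p.1 p.2)
      = (Finset.Icc (1 : ℤ) ((n : ℤ) ^ 2)).val ∧
  (∀ i ∈ Finset.Icc 1 n, res (rowList n M i) = r) ∧
  (∀ j ∈ Finset.Icc 1 n, res (colList n M j) = r) ∧
  res (diagList n M) = r ∧
  res (adiagList n M) = r

/-- `[k]_n = ((k-1) mod n) + 1 ∈ {1,…,n}`. -/
def wrap (n k : ℤ) : ℤ := (k - 1) % n + 1

/-- Kochański's indexing function `f(i,j) = (m-i)·(-1)^j + n(n-j) + m`. -/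
def koch (n m i j : ℤ) : ℤ := (m - i) * (if Even j then 1 else -1) + n * (n - j) + m

/-- Kochański's matrix: `M i j = f((i+j)/2, (j-i)/2 + m)` when `i, j` have the same
parity, and `M i j = f([(i+j+n)/2]_n, [(j-i+n)/2 + m]_n)` otherwise. -/
def kochM (n m i j : ℤ) : ℤ :=
  if Even (i + j) then koch n m ((i + j) / 2) ((j - i) / 2 + m)
  else koch n m (wrap n ((i + j + n) / 2)) (wrap n ((j - i + n) / 2 + m))

namespace KochAux

/-! ### Basic arithmetic lemmas -/

lemma wrap_lb {n : ℤ} (hn : 0 < n) (k : ℤ) : 1 ≤ wrap n k := by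
  have := Int.emod_nonneg (k - 1) (by omega : n ≠ 0)
  unfold wrap; omega

lemma wrap_ub {n : ℤ} (hn : 0 < n) (k : ℤ) : wrap n k ≤ n := by
  have := Int.emod_lt_of_pos (k - 1) hn
  unfold wrap; omega

lemma wrap_dvd (n k : ℤ) : n ∣ wrap n k - k := by
  refine ⟨-((k - 1) / n), ?_⟩
  have := Int.mul_ediv_add_emod (k - 1) n
  unfold wrap; linarith

lemma emod_sub_dvd (n a : ℤ) : n ∣ a % n - a := by
  refine ⟨-(a / n), ?_⟩
  have := Int.mul_ediv_add_emod a n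
  linarith

lemma eq_of_dvd_of_bounds {n a b : ℤ} (h : n ∣ a - b) (h1 : 1 ≤ a) (h2 : a ≤ n)
    (h3 : 1 ≤ b) (h4 : b ≤ n) : a = b := by
  have := Int.eq_zero_of_abs_lt_dvd h (by rw [abs_lt]; omega)
  omega

lemma dvd_zero_small {n a : ℤ} (h : n ∣ a) (h1 : -n < a) (h2 : a < n) : a = 0 :=
  Int.eq_zero_of_abs_lt_dvd h (by rw [abs_lt]; omega)

lemma wrap_congr {n a b : ℤ} (h : n ∣ a - b) : wrap n a = wrap n b := by
  unfold wrap
  have : (a - 1) % n = (b - 1) % n :=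
    Int.ModEq.sub_right 1 (Int.modEq_iff_dvd.mpr
      (by rw [show b - a = -(a - b) by ring]; exact dvd_neg.mpr h))
  rw [this]

lemma dvd_sub_trans {n a b c : ℤ} (h1 : n ∣ a - b) (h2 : n ∣ b - c) : n ∣ a - c := by
  have := dvd_add h1 h2; rwa [sub_add_sub_cancel] at this

lemma wrap_eq_dvd {n a b : ℤ} (h : wrap n a = wrap n b) : n ∣ a - b := by
  have h1 := wrap_dvd n a
  have h2 := wrap_dvd n b
  rw [h] at h1
  obtain ⟨c1, hc1⟩ := h1; obtain ⟨c2, hc2⟩ := h2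
  exact ⟨c2 - c1, by linarith [mul_sub n c2 c1]⟩

lemma dvd_cancel_two {n m x : ℤ} (hm : 2 * m = n + 1) (h : n ∣ 2 * x) : n ∣ x := by
  have h2 : n ∣ m * (2 * x) := h.mul_left m
  have h3 : m * (2 * x) = n * x + x := by linear_combination x * hm
  rw [h3] at h2
  exact (dvd_add_right ⟨x, rfl⟩).mp h2

lemma dvd_cancel_m {n m x : ℤ} (hm : 2 * m = n + 1) (h : n ∣ m * x) : n ∣ x := by
  have h2 : n ∣ 2 * (m * x) := h.mul_left 2
  have h3 : 2 * (m * x) = n * x + x := by linear_combination x * hm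
  rw [h3] at h2
  exact (dvd_add_right ⟨x, rfl⟩).mp h2

/-! ### `koch` structure -/

/-- within-block value -/
def bV (m i j : ℤ) : ℤ := m + (m - i) * (if Even j then 1 else -1)

lemma koch_block (n m i j : ℤ) : koch n m i j = n * (n - j) + bV m i j := by
  unfold koch bV; ring

lemma bV_mem {n m i : ℤ} (hm : 2 * m = n + 1) (h1 : 1 ≤ i) (h2 : i ≤ n) (j : ℤ) :
    1 ≤ bV m i j ∧ bV m i j ≤ n := by
  unfold bV; split <;> constructor <;> omega

lemma koch_mem {n m i j : ℤ} (hm : 2 * m = n + 1) (hi1 : 1 ≤ i) (hi2 : i ≤ n)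
    (hj1 : 1 ≤ j) (hj2 : j ≤ n) : 1 ≤ koch n m i j ∧ koch n m i j ≤ n ^ 2 := by
  rw [koch_block]
  obtain ⟨hb1, hb2⟩ := bV_mem (i := i) hm hi1 hi2 j
  constructor <;> nlinarith

lemma koch_inj {n m i j i' j' : ℤ} (hm : 2 * m = n + 1) (hi1 : 1 ≤ i) (hi2 : i ≤ n)
    (hj1 : 1 ≤ j) (hj2 : j ≤ n) (hi1' : 1 ≤ i') (hi2' : i' ≤ n) (hj1' : 1 ≤ j') (hj2' : j' ≤ n)
    (h : koch n m i j = koch n m i' j') : i = i' ∧ j = j' := by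
  rw [koch_block, koch_block] at h
  obtain ⟨hb1, hb2⟩ := bV_mem (i := i) hm hi1 hi2 j
  obtain ⟨hb1', hb2'⟩ := bV_mem (i := i') hm hi1' hi2' j'
  have hd : n ∣ bV m i j - bV m i' j' := ⟨j - j', by linarith [mul_sub n j j']⟩
  have hb : bV m i j = bV m i' j' := eq_of_dvd_of_bounds hd hb1 hb2 hb1' hb2'
  have hj : j = j' := by
    have : n * (n - j) = n * (n - j') := by omega
    have := mul_left_cancel₀ (by omega : (n:ℤ) ≠ 0) this
    omega
  subst hj
  refine ⟨?_, rfl⟩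
  unfold bV at hb
  split at hb <;> omega

/-- canonical parameters for `kochM` -/
lemma kochM_eq {n m i j : ℤ} (hm : 2 * m = n + 1) (hi1 : 1 ≤ i) (hi2 : i ≤ n)
    (hj1 : 1 ≤ j) (hj2 : j ≤ n) :
    kochM n m i j = koch n m (wrap n (m * (i + j))) (wrap n (m * (j - i) + m)) := by
  have hn0 : (0:ℤ) < n := by omega
  unfold kochM
  split
  · rename_i hev
    obtain ⟨a, ha⟩ : ∃ a, i + j = 2 * a := by
      obtain ⟨a, ha⟩ := hev; exact ⟨a, by omega⟩
    obtain ⟨b, hb⟩ : ∃ b, j - i = 2 * b := by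
      obtain ⟨a, ha⟩ := hev; exact ⟨j - a, by omega⟩
    have hI : (i + j) / 2 = a := by omega
    have hJ : (j - i) / 2 = b := by omega
    rw [hI, hJ]
    have e1 : wrap n (m * (i + j)) = a := by
      refine eq_of_dvd_of_bounds ?_ (wrap_lb hn0 _) (wrap_ub hn0 _) (by omega) (by omega)
      exact dvd_sub_trans (wrap_dvd n (m * (i + j)))
        ⟨a, by linear_combination a * hm + m * ha⟩
    have e2 : wrap n (m * (j - i) + m) = b + m := by
      refine eq_of_dvd_of_bounds ?_ (wrap_lb hn0 _) (wrap_ub hn0 _) (by omega) (by omega)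
      exact dvd_sub_trans (wrap_dvd n (m * (j - i) + m))
        ⟨b, by linear_combination b * hm + m * hb⟩
    rw [e1, e2]
  · rename_i hev
    have hodd : ¬ Even (i + j) := hev
    obtain ⟨a, ha⟩ : ∃ a, i + j + n = 2 * a := by
      rcases Int.even_or_odd (i + j) with h | h
      · exact absurd h hodd
      · obtain ⟨c, hc⟩ := h
        have hn : Odd n := by
          by_contra hne
          have : Even n := Int.not_odd_iff_even.mp hne
          obtain ⟨d, hd⟩ := this; omega
        obtain ⟨d, hd⟩ := hn
        exact ⟨c + d + 1, by omega⟩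
    have hI : (i + j + n) / 2 = a := by omega
    have hJ : (j - i + n) / 2 = a - i := by omega
    rw [hI, hJ]
    have e1 : wrap n a = wrap n (m * (i + j)) := by
      refine wrap_congr (dvd_cancel_two hm ?_)
      exact ⟨1 - (i + j), by linear_combination -ha - (i + j) * hm⟩
    have e2 : wrap n (a - i + m) = wrap n (m * (j - i) + m) := by
      refine wrap_congr (dvd_cancel_two hm ?_)
      exact ⟨1 + i - j, by linear_combination -ha - (j - i) * hm⟩
    rw [e1, e2]

/-! ### Residuum machinery -/

lemma alt_map_range (v : ℕ → ℤ) : ∀ n : ℕ,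
    ((List.range n).map v).alternatingSum = ∑ u ∈ Finset.range n, (-1:ℤ)^u * v u := by
  intro n
  induction n generalizing v with
  | zero => simp
  | succ n ih =>
    rw [List.range_succ_eq_map, Finset.sum_range_succ']
    simp only [List.map_cons, List.alternatingSum_cons, List.map_map]
    rw [show (v ∘ Nat.succ) = (fun u => v (u + 1)) from rfl, ih (fun u => v (u + 1))]
    have : ∀ u : ℕ, (-1:ℤ)^(u+1) * v (u+1) = -((-1:ℤ)^u * v (u+1)) := by
      intro u; rw [pow_succ]; ring
    rw [Finset.sum_congr rfl (fun u _ => this u)]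
    rw [Finset.sum_neg_distrib]
    ring

lemma range_map_perm {n : ℕ} {π : ℕ → ℕ} (hlt : ∀ u < n, π u < n)
    (hinj : ∀ u < n, ∀ u' < n, π u = π u' → u = u') :
    ((List.range n).map π).Perm (List.range n) := by
  have hnd : ((List.range n).map π).Nodup := by
    refine List.Nodup.map_on ?_ (List.nodup_range (n := n))
    intro a ha b hb hab
    exact hinj a (List.mem_range.mp ha) b (List.mem_range.mp hb) hab
  refine List.perm_of_nodup_nodup_toFinset_eq hnd (List.nodup_range (n := n)) ?_
  apply Finset.eq_of_subset_of_card_le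
  · intro x hx
    rw [List.mem_toFinset] at hx
    obtain ⟨u, hu, rfl⟩ := List.mem_map.mp hx
    rw [List.mem_toFinset, List.mem_range]
    exact hlt u (List.mem_range.mp hu)
  · rw [List.toFinset_card_of_nodup hnd, List.toFinset_card_of_nodup (List.nodup_range (n := n)),
      List.length_map, List.length_range]

lemma res_formula (n : ℕ) (e v : ℕ → ℤ) (π : ℕ → ℕ)
    (hlt : ∀ u < n, π u < n)
    (hinj : ∀ u < n, ∀ u' < n, π u = π u' → u = u')
    (hdec : ∀ u, u + 1 < n → v (u + 1) < v u)
    (he : ∀ u < n, e (π u) = v u) :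
    res ((List.range n).map e) = ∑ u ∈ Finset.range n, (-1:ℤ)^u * v u := by
  have hmono : ∀ a b, a ≤ b → b < n → v b ≤ v a := by
    intro a b hab hbn
    induction b with
    | zero => interval_cases a; rfl
    | succ b ihb =>
      rcases Nat.lt_or_ge a (b+1) with h | h
      · exact le_trans (le_of_lt (hdec b hbn)) (ihb (by omega) (by omega))
      · have : a = b + 1 := by omega
        subst this; rfl
  have hperm : ((List.range n).map e).Perm ((List.range n).map v) := by
    have h1 := (range_map_perm hlt hinj).map e
    rw [List.map_map] at h1
    have h2 : (List.range n).map (e ∘ π) = (List.range n).map v := by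
      apply List.map_congr_left
      intro u hu
      exact he u (List.mem_range.mp hu)
    rw [h2] at h1
    exact h1.symm
  have hsorted : ((List.range n).map v).Pairwise (· ≥ ·) := by
    rw [List.pairwise_map]
    refine List.Pairwise.imp_of_mem ?_ (List.pairwise_lt_range (n := n))
    intro a b ha hb hab
    exact hmono a b (le_of_lt hab) (List.mem_range.mp hb)
  have : (((List.range n).map e).insertionSort (· ≥ ·)) = (List.range n).map v := by
    refine List.Perm.eq_of_pairwise' (List.pairwise_insertionSort _ _) hsorted ?_
    exact (List.perm_insertionSort _ _).trans hperm
  rw [res, this, alt_map_range]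

lemma sum_neg_one_pow {k : ℕ} : ∑ u ∈ Finset.range (2*k+1), (-1:ℤ)^u = 1 := by
  induction k with
  | zero => simp
  | succ k ih =>
    have h1 : 2*(k+1)+1 = (2*k+1) + 1 + 1 := by ring
    rw [h1, Finset.sum_range_succ, Finset.sum_range_succ, ih]
    have e1 : (-1:ℤ)^(2*k+1) = -1 := Odd.neg_one_pow ⟨k, by ring⟩
    have e2 : (-1:ℤ)^(2*k+1+1) = 1 := Even.neg_one_pow ⟨k+1, by ring⟩
    rw [e1, e2]; ring

lemma sum_neg_one_pow_mul {k : ℕ} : ∑ u ∈ Finset.range (2*k+1), (-1:ℤ)^u * u = k := by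
  induction k with
  | zero => simp
  | succ k ih =>
    have h1 : 2*(k+1)+1 = (2*k+1) + 1 + 1 := by ring
    rw [h1, Finset.sum_range_succ, Finset.sum_range_succ, ih]
    have e1 : (-1:ℤ)^(2*k+1) = -1 := Odd.neg_one_pow ⟨k, by ring⟩
    have e2 : (-1:ℤ)^(2*k+1+1) = 1 := Even.neg_one_pow ⟨k+1, by ring⟩
    rw [e1, e2]; push_cast; ring

lemma sum_alt_linear {k : ℕ} (c d : ℤ) :
    ∑ u ∈ Finset.range (2*k+1), (-1:ℤ)^u * (c + d*u) = c + d*k := by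
  have h : ∀ u ∈ Finset.range (2*k+1), (-1:ℤ)^u * (c + d*(u:ℤ)) =
      c * (-1)^u + d * ((-1)^u * u) := fun u _ => by ring
  rw [Finset.sum_congr rfl h, Finset.sum_add_distrib, ← Finset.mul_sum, ← Finset.mul_sum,
    sum_neg_one_pow, sum_neg_one_pow_mul]
  ring

lemma image_range_eq {n : ℕ} {π : ℕ → ℕ} (hlt : ∀ u < n, π u < n)
    (hinj : ∀ u < n, ∀ u' < n, π u = π u' → u = u') :
    (Finset.range n).image π = Finset.range n := by
  apply Finset.eq_of_subset_of_card_le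
  · intro x hx
    obtain ⟨u, hu, rfl⟩ := Finset.mem_image.mp hx
    exact Finset.mem_range.mpr (hlt u (Finset.mem_range.mp hu))
  · rw [Finset.card_image_of_injOn (fun a ha b hb hab =>
      hinj a (Finset.mem_range.mp ha) b (Finset.mem_range.mp hb) hab)]

lemma sum_reindex {n : ℕ} {π : ℕ → ℕ} (hlt : ∀ u < n, π u < n)
    (hinj : ∀ u < n, ∀ u' < n, π u = π u' → u = u') (g : ℕ → ℤ) :
    ∑ u ∈ Finset.range n, g (π u) = ∑ t ∈ Finset.range n, g t := by
  have h := Finset.sum_image (s := Finset.range n) (g := π) (f := g)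
    (fun a ha b hb hab => hinj a (Finset.mem_range.mp ha) b (Finset.mem_range.mp hb) hab)
  rw [image_range_eq hlt hinj] at h
  exact h.symm

/-! ### the sum of an injective `[1,n]`-valued function -/

lemma image_eq_Icc {nn : ℕ} (g : ℕ → ℤ) (hg : ∀ t < nn, 1 ≤ g t ∧ g t ≤ nn)
    (hinj : ∀ t < nn, ∀ t' < nn, g t = g t' → t = t') :
    (Finset.range nn).image g = Finset.Icc (1:ℤ) nn := by
  apply Finset.eq_of_subset_of_card_le
  · intro x hx
    obtain ⟨t, ht, rfl⟩ := Finset.mem_image.mp hx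
    have := hg t (Finset.mem_range.mp ht)
    exact Finset.mem_Icc.mpr this
  · rw [Finset.card_image_of_injOn (fun a ha b hb hab =>
      hinj a (Finset.mem_range.mp ha) b (Finset.mem_range.mp hb) hab)]
    rw [Finset.card_range, Int.card_Icc]
    omega

lemma sum_Icc_int (nn : ℕ) : 2 * ∑ x ∈ Finset.Icc (1:ℤ) nn, x = nn * (nn + 1) := by
  induction nn with
  | zero => simp
  | succ k ih =>
    have hcast : ((k+1 : ℕ) : ℤ) = (k:ℤ) + 1 := by push_cast; ring
    have hins : Finset.Icc (1:ℤ) ((k:ℤ) + 1) = insert ((k:ℤ)+1) (Finset.Icc 1 (k:ℤ)) := by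
      ext x
      simp only [Finset.mem_Icc, Finset.mem_insert]
      omega
    rw [hcast, hins, Finset.sum_insert (by simp)]
    push_cast
    linarith

lemma sum_range_wrapinj {nn : ℕ} {m : ℤ} (hm : 2*m = (nn:ℤ)+1) (g : ℕ → ℤ)
    (hg : ∀ t < nn, 1 ≤ g t ∧ g t ≤ nn)
    (hinj : ∀ t < nn, ∀ t' < nn, g t = g t' → t = t') :
    ∑ t ∈ Finset.range nn, g t = nn * m := by
  have h1 := Finset.sum_image (s := Finset.range nn) (g := g) (f := fun x : ℤ => x)
    (fun a ha b hb hab => hinj a (Finset.mem_range.mp ha) b (Finset.mem_range.mp hb) hab)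
  rw [image_eq_Icc g hg hinj] at h1
  have h2 : ∑ t ∈ Finset.range nn, g t = ∑ x ∈ Finset.Icc (1:ℤ) nn, x := h1.symm
  have h3 := sum_Icc_int nn
  have : 2 * ∑ t ∈ Finset.range nn, g t = 2 * ((nn:ℤ) * m) := by
    rw [h2]; linear_combination h3 - (nn:ℤ) * hm
  exact mul_left_cancel₀ two_ne_zero this

/-! ### the main line lemma -/

lemma line_res {n : ℕ} {m : ℤ} (hm : 2 * m = (n:ℤ) + 1) (hn3 : 3 ≤ n)
    (e : ℕ → ℤ) (I J : ℕ → ℤ) (π : ℕ → ℕ)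
    (hI : ∀ t < n, 1 ≤ I t ∧ I t ≤ n)
    (hsum : ∑ t ∈ Finset.range n, I t = n * m)
    (he : ∀ t < n, e t = koch n m (I t) (J t))
    (hπlt : ∀ u < n, π u < n)
    (hπinj : ∀ u < n, ∀ u' < n, π u = π u' → u = u')
    (hQ : ∀ u < n, J (π u) = u + 1) :
    res ((List.range n).map e) = (n:ℤ) * (m - 1) + m := by
  obtain ⟨k, hk⟩ : ∃ k : ℕ, n = 2*k+1 := by
    rcases Nat.even_or_odd n with h | h
    · exfalso; obtain ⟨d, hd⟩ := h; omega
    · obtain ⟨d, hd⟩ := h; exact ⟨d, by omega⟩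
  set v : ℕ → ℤ := fun u => (n:ℤ) * ((n:ℤ) - 1 - u) + bV m (I (π u)) ((u:ℤ) + 1) with hv
  have hbnds : ∀ u < n, 1 ≤ bV m (I (π u)) ((u:ℤ)+1) ∧ bV m (I (π u)) ((u:ℤ)+1) ≤ n :=
    fun u hu => bV_mem hm (hI _ (hπlt u hu)).1 (hI _ (hπlt u hu)).2 _
  rw [res_formula n e v π hπlt hπinj ?hdec ?hepi]
  case hdec =>
    intro u hu
    have h1 := hbnds u (by omega)
    have h2 := hbnds (u+1) hu
    simp only [hv]
    push_cast at h1 h2 ⊢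
    nlinarith [h1.1, h1.2, h2.1, h2.2]
  case hepi =>
    intro u hu
    rw [he _ (hπlt u hu), hQ u hu, koch_block, hv]
    push_cast
    ring
  have split : ∀ u ∈ Finset.range n, (-1:ℤ)^u * v u =
      (-1:ℤ)^u * ((n:ℤ)*((n:ℤ)-1) + (-(n:ℤ))*u) + (m * (-1)^u + (I (π u) - m)) := by
    intro u hu
    have hterm : (-1:ℤ)^u * bV m (I (π u)) ((u:ℤ)+1) = m * (-1)^u + (I (π u) - m) := by
      rcases Nat.even_or_odd u with h | h
      · have h1 : ((-1:ℤ))^u = 1 := Even.neg_one_pow h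
        have h2 : ¬ Even ((u:ℤ) + 1) := by
          rw [Int.even_add_one, not_not]
          exact (Int.even_coe_nat u).mpr h
        rw [h1]; unfold bV; rw [if_neg h2]; ring
      · have h1 : ((-1:ℤ))^u = -1 := Odd.neg_one_pow h
        have h2 : Even ((u:ℤ) + 1) := by
          rw [Int.even_add_one, Int.even_coe_nat]
          exact Nat.not_even_iff_odd.mpr h
        rw [h1]; unfold bV; rw [if_pos h2]; ring
    rw [hv]
    push_cast
    linear_combination hterm
  rw [Finset.sum_congr rfl split, Finset.sum_add_distrib]
  have s1 : ∑ u ∈ Finset.range n, (-1:ℤ)^u * ((n:ℤ)*((n:ℤ)-1) + (-(n:ℤ))*u)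
      = (n:ℤ)*((n:ℤ)-1) + (-(n:ℤ))*k := by
    rw [hk]; exact_mod_cast sum_alt_linear _ _
  have s2 : ∑ u ∈ Finset.range n, (m * (-1:ℤ)^u + (I (π u) - m)) = m := by
    rw [Finset.sum_add_distrib, ← Finset.mul_sum]
    have : ∑ u ∈ Finset.range n, ((-1:ℤ))^u = 1 := by rw [hk]; exact sum_neg_one_pow
    rw [this, Finset.sum_sub_distrib, sum_reindex hπlt hπinj I, hsum, Finset.sum_const,
      Finset.card_range]
    push_cast; ring
  rw [s1, s2]
  have hk' : (k:ℤ) = m - 1 := by push_cast [hk] at hm ⊢; omega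
  rw [hk']
  linear_combination (-(n:ℤ)) * hm

end KochAux

open KochAux in
/-- Proposition 1: for odd `n ≥ 3` and `m = (n+1)/2`, Kochański's matrix is a normal
magic square of subtraction of order `n` with residuum `(n²+1)/2`. -/
theorem kochanski_odd_square (n : ℕ) (hn : 3 ≤ n) (hodd : Odd n) :
    IsMagicSubSquare n (fun i j => kochM (n : ℤ) (((n : ℤ) + 1) / 2) (i : ℤ) (j : ℤ))
      (((n : ℤ) ^ 2 + 1) / 2) := by
  set m : ℤ := ((n : ℤ) + 1) / 2 with hmdef
  have hm : 2 * m = (n:ℤ) + 1 := by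
    obtain ⟨d, hd⟩ := hodd
    rw [hmdef]; omega
  have hn0 : (0:ℤ) < (n:ℤ) := by exact_mod_cast (show 0 < n by omega)
  have hr : ((n:ℤ)^2 + 1) / 2 = (n:ℤ) * (m - 1) + m := by
    have h2 : (n:ℤ)^2 + 1 = 2 * ((n:ℤ)*(m-1)+m) := by linear_combination (-(n:ℤ)-1) * hm
    rw [h2, Int.mul_ediv_cancel_left _ two_ne_zero]
  have hn3z : (3:ℤ) ≤ (n:ℤ) := by exact_mod_cast hn
  obtain ⟨kk, hkk⟩ : ∃ k : ℕ, n = 2*k+1 := by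
    obtain ⟨d, hd⟩ := hodd; exact ⟨d, by omega⟩
  have hsum2 : ∀ c d : ℤ, 2 * ∑ u ∈ Finset.range n, (-1:ℤ)^u * (c + d*u) = 2*c + d*((n:ℤ)-1) := by
    intro c d
    rw [hkk, sum_alt_linear]
    push_cast
    ring
  refine ⟨?norm, ?rows, ?cols, ?diag, ?adiag⟩
  case rows =>
    intro i hi
    obtain ⟨hi1, hi2⟩ := Finset.mem_Icc.mp hi
    rw [hr]
    show res ((List.range n).map fun t => kochM (n:ℤ) m (i:ℤ) ((t+1 : ℕ):ℤ)) = _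
    refine line_res hm hn
      (fun t => kochM (n:ℤ) m (i:ℤ) ((t+1 : ℕ):ℤ))
      (fun t => wrap (n:ℤ) (m * ((i:ℤ) + ((t:ℤ)+1))))
      (fun t => wrap (n:ℤ) (m * (((t:ℤ)+1) - (i:ℤ)) + m))
      (fun u => (2*u + i) % n) ?_ ?_ ?_ ?_ ?_ ?_
    · intro t ht
      exact ⟨wrap_lb hn0 _, wrap_ub hn0 _⟩
    · refine sum_range_wrapinj hm _ (fun t ht => ⟨wrap_lb hn0 _, wrap_ub hn0 _⟩) ?_
      intro t ht t' ht' hww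
      have hd := wrap_eq_dvd hww
      have heq : m * ((i:ℤ) + ((t:ℤ)+1)) - (m * ((i:ℤ) + ((t':ℤ)+1))) = m * ((t:ℤ) - t') := by
        ring
      rw [heq] at hd
      have := dvd_zero_small (dvd_cancel_m hm hd) (by omega) (by omega)
      omega
    · intro t ht
      show kochM (n:ℤ) m (i:ℤ) ((t+1 : ℕ):ℤ) = _
      rw [show ((t+1 : ℕ) : ℤ) = (t:ℤ) + 1 by push_cast; ring]
      exact kochM_eq hm (by exact_mod_cast hi1) (by exact_mod_cast hi2) (by omega) (by omega)
    · intro u hu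
      exact Nat.mod_lt _ (by omega)
    · intro u hu u' hu' hmod
      have hz : ((2*u + i : ℕ) : ℤ) % (n:ℤ) = ((2*u' + i : ℕ) : ℤ) % (n:ℤ) := by
        rw [← Int.natCast_mod, ← Int.natCast_mod]
        exact_mod_cast hmod
      have hdvd : (n:ℤ) ∣ ((2*u + i : ℕ):ℤ) - ((2*u' + i : ℕ):ℤ) := by
        have h1 := emod_sub_dvd (n:ℤ) ((2*u + i : ℕ):ℤ)
        have h2 := emod_sub_dvd (n:ℤ) ((2*u' + i : ℕ):ℤ)
        obtain ⟨c1, hc1⟩ := h1; obtain ⟨c2, hc2⟩ := h2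
        refine ⟨c2 - c1, ?_⟩
        rw [mul_sub]
        omega
      have heq2 : ((2*u + i : ℕ):ℤ) - ((2*u' + i : ℕ):ℤ) = 2 * ((u:ℤ) - u') := by
        push_cast; ring
      rw [heq2] at hdvd
      have := dvd_zero_small (dvd_cancel_two hm hdvd) (by omega) (by omega)
      omega
    · intro u hu
      show wrap (n:ℤ) (m * ((((2*u + i) % n : ℕ):ℤ)+1 - (i:ℤ)) + m) = (u:ℤ) + 1
      refine eq_of_dvd_of_bounds ?_ (wrap_lb hn0 _) (wrap_ub hn0 _) (by omega) (by omega)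
      refine dvd_sub_trans (wrap_dvd _ _) ?_
      have hcast : (((2*u + i) % n : ℕ):ℤ) = (2*(u:ℤ) + (i:ℤ)) % (n:ℤ) := by
        rw [Int.natCast_mod]; push_cast; ring_nf
      have htmod : (n:ℤ) ∣ (((2*u + i) % n : ℕ):ℤ) - (2*(u:ℤ) + (i:ℤ)) := by
        rw [hcast]; exact emod_sub_dvd _ _
      obtain ⟨c, hc⟩ := htmod
      exact ⟨m*c + ((u:ℤ)+1), by linear_combination m * hc + ((u:ℤ)+1) * hm⟩
  case cols =>
    intro j hj
    obtain ⟨hj1, hj2⟩ := Finset.mem_Icc.mp hj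
    rw [hr]
    show res ((List.range n).map fun t => kochM (n:ℤ) m ((t+1 : ℕ):ℤ) (j:ℤ)) = _
    refine line_res hm hn
      (fun t => kochM (n:ℤ) m ((t+1 : ℕ):ℤ) (j:ℤ))
      (fun t => wrap (n:ℤ) (m * (((t:ℤ)+1) + (j:ℤ))))
      (fun t => wrap (n:ℤ) (m * ((j:ℤ) - ((t:ℤ)+1)) + m))
      (fun u => (j + 2*(n-1-u)) % n) ?_ ?_ ?_ ?_ ?_ ?_
    · intro t ht
      exact ⟨wrap_lb hn0 _, wrap_ub hn0 _⟩
    · refine sum_range_wrapinj hm _ (fun t ht => ⟨wrap_lb hn0 _, wrap_ub hn0 _⟩) ?_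
      intro t ht t' ht' hww
      have hd := wrap_eq_dvd hww
      have heq : m * (((t:ℤ)+1) + (j:ℤ)) - (m * (((t':ℤ)+1) + (j:ℤ))) = m * ((t:ℤ) - t') := by
        ring
      rw [heq] at hd
      have := dvd_zero_small (dvd_cancel_m hm hd) (by omega) (by omega)
      omega
    · intro t ht
      show kochM (n:ℤ) m ((t+1 : ℕ):ℤ) (j:ℤ) = _
      rw [show ((t+1 : ℕ) : ℤ) = (t:ℤ) + 1 by push_cast; ring]
      exact kochM_eq hm (by omega) (by omega) (by exact_mod_cast hj1) (by exact_mod_cast hj2)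
    · intro u hu
      exact Nat.mod_lt _ (by omega)
    · intro u hu u' hu' hmod
      have hz : ((j + 2*(n-1-u) : ℕ) : ℤ) % (n:ℤ) = ((j + 2*(n-1-u') : ℕ) : ℤ) % (n:ℤ) := by
        rw [← Int.natCast_mod, ← Int.natCast_mod]
        exact_mod_cast hmod
      have hdvd : (n:ℤ) ∣ ((j + 2*(n-1-u) : ℕ):ℤ) - ((j + 2*(n-1-u') : ℕ):ℤ) := by
        have h1 := emod_sub_dvd (n:ℤ) ((j + 2*(n-1-u) : ℕ):ℤ)
        have h2 := emod_sub_dvd (n:ℤ) ((j + 2*(n-1-u') : ℕ):ℤ)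
        obtain ⟨c1, hc1⟩ := h1; obtain ⟨c2, hc2⟩ := h2
        refine ⟨c2 - c1, ?_⟩
        rw [mul_sub]
        omega
      have heq2 : ((j + 2*(n-1-u) : ℕ):ℤ) - ((j + 2*(n-1-u') : ℕ):ℤ) = 2 * ((u':ℤ) - u) := by
        omega
      rw [heq2] at hdvd
      have := dvd_zero_small (dvd_cancel_two hm hdvd) (by omega) (by omega)
      omega
    · intro u hu
      show wrap (n:ℤ) (m * ((j:ℤ) - ((((j + 2*(n-1-u)) % n : ℕ):ℤ)+1)) + m) = (u:ℤ) + 1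
      refine eq_of_dvd_of_bounds ?_ (wrap_lb hn0 _) (wrap_ub hn0 _) (by omega) (by omega)
      refine dvd_sub_trans (wrap_dvd _ _) ?_
      have hA : ((j + 2*(n-1-u) : ℕ) : ℤ) = (j:ℤ) + 2*((n:ℤ)-1-(u:ℤ)) := by omega
      have hcast : (((j + 2*(n-1-u)) % n : ℕ):ℤ) = ((j:ℤ) + 2*((n:ℤ)-1-(u:ℤ))) % (n:ℤ) := by
        rw [Int.natCast_mod, hA]
      have htmod : (n:ℤ) ∣ (((j + 2*(n-1-u)) % n : ℕ):ℤ) - ((j:ℤ) + 2*((n:ℤ)-1-(u:ℤ))) := by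
        rw [hcast]; exact emod_sub_dvd _ _
      obtain ⟨c, hc⟩ := htmod
      exact ⟨(u:ℤ) + 1 - 2*m - m*c, by linear_combination (-m) * hc + ((u:ℤ)+1) * hm⟩
  case diag =>
    rw [hr]
    show res ((List.range n).map fun t => kochM (n:ℤ) m ((t+1 : ℕ):ℤ) ((t+1 : ℕ):ℤ)) = _
    have hentry : ∀ t < n, kochM (n:ℤ) m ((t+1 : ℕ):ℤ) ((t+1 : ℕ):ℤ)
        = (n:ℤ)*((n:ℤ)-m) + bV m ((t:ℤ)+1) m := by
      intro t ht
      rw [show ((t+1 : ℕ) : ℤ) = (t:ℤ) + 1 by push_cast; ring]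
      rw [kochM_eq hm (by omega) (by omega) (by omega) (by omega)]
      have e1 : wrap (n:ℤ) (m * (((t:ℤ)+1) + ((t:ℤ)+1))) = (t:ℤ)+1 := by
        refine eq_of_dvd_of_bounds ?_ (wrap_lb hn0 _) (wrap_ub hn0 _) (by omega) (by omega)
        exact dvd_sub_trans (wrap_dvd _ _) ⟨(t:ℤ)+1, by linear_combination ((t:ℤ)+1) * hm⟩
      have e2 : wrap (n:ℤ) (m * (((t:ℤ)+1) - ((t:ℤ)+1)) + m) = m := by
        refine eq_of_dvd_of_bounds ?_ (wrap_lb hn0 _) (wrap_ub hn0 _) (by omega) (by omega)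
        exact dvd_sub_trans (wrap_dvd _ _) ⟨0, by ring⟩
      rw [e1, e2, koch_block]
    have hh1 : ∀ u < n, (fun u => if Even m then u else n - 1 - u) u < n := by
      intro u hu; dsimp only; split <;> omega
    have hh2 : ∀ u < n, ∀ u' < n, (fun u => if Even m then u else n - 1 - u) u
        = (fun u => if Even m then u else n - 1 - u) u' → u = u' := by
      intro u hu u' hu' h; dsimp only at h; split at h <;> omega
    have hh3 : ∀ u, u + 1 < n → (fun u => (n:ℤ)*((n:ℤ)-m) + ((n:ℤ) - u)) (u+1)
        < (fun u => (n:ℤ)*((n:ℤ)-m) + ((n:ℤ) - u)) u := by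
      intro u hu; dsimp only; push_cast; linarith
    have hh4 : ∀ u < n, (fun t => kochM (n:ℤ) m ((t+1 : ℕ):ℤ) ((t+1 : ℕ):ℤ))
        ((fun u => if Even m then u else n - 1 - u) u)
        = (fun u => (n:ℤ)*((n:ℤ)-m) + ((n:ℤ) - u)) u := by
      intro u hu
      dsimp only
      by_cases hE : Even m
      · rw [if_pos hE, hentry u hu]
        unfold bV
        rw [if_pos hE]
        push_cast
        linarith
      · rw [if_neg hE, hentry (n-1-u) (by omega)]
        unfold bV
        rw [if_neg hE]
        have hc : ((n-1-u : ℕ):ℤ) = (n:ℤ)-1-(u:ℤ) := by omega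
        rw [hc]
        push_cast
        linarith
    rw [res_formula n _ (fun u => (n:ℤ)*((n:ℤ)-m) + ((n:ℤ) - u))
      (fun u => if Even m then u else n - 1 - u) hh1 hh2 hh3 hh4]
    refine mul_left_cancel₀ (two_ne_zero) ?_
    have hre : ∀ u ∈ Finset.range n, (-1:ℤ)^u * ((n:ℤ)*((n:ℤ)-m) + ((n:ℤ) - u))
        = (-1:ℤ)^u * (((n:ℤ)*((n:ℤ)-m) + (n:ℤ)) + (-1)*u) := fun u _ => by ring
    rw [Finset.sum_congr rfl hre, hsum2]
    linear_combination (-(2*(n:ℤ)+1)) * hm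
  case adiag =>
    rw [hr]
    show res ((List.range n).map fun t => kochM (n:ℤ) m ((t+1 : ℕ):ℤ) ((n-t : ℕ):ℤ)) = _
    have hentry : ∀ t < n, kochM (n:ℤ) m ((t+1 : ℕ):ℤ) ((n-t : ℕ):ℤ) = (n:ℤ)*(t:ℤ) + m := by
      intro t ht
      rw [show ((t+1 : ℕ) : ℤ) = (t:ℤ) + 1 by push_cast; ring,
        show ((n-t : ℕ) : ℤ) = (n:ℤ) - (t:ℤ) by omega]
      rw [kochM_eq hm (by omega) (by omega) (by omega) (by omega)]
      have e1 : wrap (n:ℤ) (m * (((t:ℤ)+1) + ((n:ℤ) - t))) = m := by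
        refine eq_of_dvd_of_bounds ?_ (wrap_lb hn0 _) (wrap_ub hn0 _) (by omega) (by omega)
        exact dvd_sub_trans (wrap_dvd _ _) ⟨m, by ring⟩
      have e2 : wrap (n:ℤ) (m * (((n:ℤ) - t) - ((t:ℤ)+1)) + m) = (n:ℤ) - t := by
        refine eq_of_dvd_of_bounds ?_ (wrap_lb hn0 _) (wrap_ub hn0 _) (by omega) (by omega)
        exact dvd_sub_trans (wrap_dvd _ _) ⟨m - (t:ℤ) - 1, by linear_combination (-(t:ℤ)) * hm⟩
      rw [e1, e2, koch_block]
      unfold bV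
      split <;> ring
    have hh1 : ∀ u < n, (fun u => n - 1 - u) u < n := by
      intro u hu; dsimp only; omega
    have hh2 : ∀ u < n, ∀ u' < n, (fun u => n - 1 - u) u = (fun u => n - 1 - u) u' → u = u' := by
      intro u hu u' hu' h; dsimp only at h; omega
    have hh3 : ∀ u, u + 1 < n → (fun u => (n:ℤ)*((n:ℤ)-1-u) + m) (u+1)
        < (fun u => (n:ℤ)*((n:ℤ)-1-u) + m) u := by
      intro u hu; dsimp only; push_cast; nlinarith [hn3z]
    have hh4 : ∀ u < n, (fun t => kochM (n:ℤ) m ((t+1 : ℕ):ℤ) ((n-t : ℕ):ℤ))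
        ((fun u => n - 1 - u) u) = (fun u => (n:ℤ)*((n:ℤ)-1-u) + m) u := by
      intro u hu
      dsimp only
      rw [hentry (n-1-u) (by omega), show ((n-1-u : ℕ):ℤ) = (n:ℤ)-1-(u:ℤ) by omega]
    rw [res_formula n _ (fun u => (n:ℤ)*((n:ℤ)-1-u) + m) (fun u => n - 1 - u) hh1 hh2 hh3 hh4]
    refine mul_left_cancel₀ (two_ne_zero) ?_
    have hre : ∀ u ∈ Finset.range n, (-1:ℤ)^u * ((n:ℤ)*((n:ℤ)-1-u) + m)
        = (-1:ℤ)^u * (((n:ℤ)*((n:ℤ)-1) + m) + (-(n:ℤ))*u) := fun u _ => by ring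
    rw [Finset.sum_congr rfl hre, hsum2]
    linear_combination (-(n:ℤ)) * hm
  case norm =>
    set S : Finset (ℕ × ℕ) := Finset.Icc 1 n ×ˢ Finset.Icc 1 n with hS
    set f : ℕ × ℕ → ℤ := fun p => kochM (n:ℤ) m (p.1:ℤ) (p.2:ℤ) with hf
    have hmem : ∀ p : ℕ × ℕ, p ∈ S → 1 ≤ p.1 ∧ p.1 ≤ n ∧ 1 ≤ p.2 ∧ p.2 ≤ n := by
      intro p hp
      rw [hS, Finset.mem_product, Finset.mem_Icc, Finset.mem_Icc] at hp
      exact ⟨hp.1.1, hp.1.2, hp.2.1, hp.2.2⟩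
    have hinjOn : Set.InjOn f ↑S := by
      intro p hp q hq hfeq
      obtain ⟨hp1, hp2, hp3, hp4⟩ := hmem p (Finset.mem_coe.mp hp)
      obtain ⟨hq1, hq2, hq3, hq4⟩ := hmem q (Finset.mem_coe.mp hq)
      rw [hf] at hfeq
      simp only at hfeq
      rw [kochM_eq hm (by exact_mod_cast hp1) (by exact_mod_cast hp2)
          (by exact_mod_cast hp3) (by exact_mod_cast hp4),
        kochM_eq hm (by exact_mod_cast hq1) (by exact_mod_cast hq2)
          (by exact_mod_cast hq3) (by exact_mod_cast hq4)] at hfeq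
      obtain ⟨hIeq, hJeq⟩ := koch_inj hm (wrap_lb hn0 _) (wrap_ub hn0 _) (wrap_lb hn0 _)
        (wrap_ub hn0 _) (wrap_lb hn0 _) (wrap_ub hn0 _) (wrap_lb hn0 _) (wrap_ub hn0 _) hfeq
      have d1 := wrap_eq_dvd hIeq
      have d2 := wrap_eq_dvd hJeq
      rw [show m * ((p.1:ℤ) + p.2) - m * ((q.1:ℤ) + q.2)
          = m * (((p.1:ℤ) + p.2) - ((q.1:ℤ) + q.2)) by ring] at d1
      rw [show m * ((p.2:ℤ) - p.1) + m - (m * ((q.2:ℤ) - q.1) + m)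
          = m * (((p.2:ℤ) - p.1) - ((q.2:ℤ) - q.1)) by ring] at d2
      have d1' := dvd_cancel_m hm d1
      have d2' := dvd_cancel_m hm d2
      have ds : (n:ℤ) ∣ 2 * ((p.2:ℤ) - q.2) := by
        obtain ⟨c1, hc1⟩ := d1'; obtain ⟨c2, hc2⟩ := d2'
        exact ⟨c1 + c2, by linear_combination hc1 + hc2⟩
      have dd : (n:ℤ) ∣ 2 * ((p.1:ℤ) - q.1) := by
        obtain ⟨c1, hc1⟩ := d1'; obtain ⟨c2, hc2⟩ := d2'
        exact ⟨c1 - c2, by linear_combination hc1 - hc2⟩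
      have e2 := dvd_zero_small (dvd_cancel_two hm ds) (by omega) (by omega)
      have e1 := dvd_zero_small (dvd_cancel_two hm dd) (by omega) (by omega)
      have : p.1 = q.1 ∧ p.2 = q.2 := by omega
      exact Prod.ext this.1 this.2
    have hmap : S.val.map f = (S.image f).val := (Finset.image_val_of_injOn hinjOn).symm
    have himg : S.image f = Finset.Icc (1:ℤ) ((n:ℤ)^2) := by
      apply Finset.eq_of_subset_of_card_le
      · intro x hx
        obtain ⟨p, hp, rfl⟩ := Finset.mem_image.mp hx
        obtain ⟨hp1, hp2, hp3, hp4⟩ := hmem p hp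
        rw [hf]
        simp only
        rw [kochM_eq hm (by exact_mod_cast hp1) (by exact_mod_cast hp2)
            (by exact_mod_cast hp3) (by exact_mod_cast hp4)]
        exact Finset.mem_Icc.mpr (koch_mem hm (wrap_lb hn0 _) (wrap_ub hn0 _)
          (wrap_lb hn0 _) (wrap_ub hn0 _))
      · rw [Finset.card_image_of_injOn hinjOn, hS, Finset.card_product, Nat.card_Icc,
          Int.card_Icc]
        have h5 : ((n:ℤ)^2 + 1 - 1).toNat = n * n := by
          rw [show ((n:ℤ)^2 + 1 - 1) = ((n*n : ℕ) : ℤ) by push_cast; ring, Int.toNat_natCast]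
        rw [h5]
        simp
    show S.val.map f = (Finset.Icc (1:ℤ) ((n:ℤ)^2)).val
    rw [hmap, himg]
end

section
/- Let n ≥ 3 be an odd integer, m = (n+1)/2, [k]_n = ((k−1) mod n) + 1, f(i,j) = (m−i)·(−1)^j + n(n−j) + m, and let M be the n×n matrix with M_{i,j} = f((i+j)/2, (j−i)/2 + m) if i and j have the same parity, and M_{i,j} = f([(i+j+n)/2]_n, [(j−i+n)/2 + m]_n) otherwise. Then the map (i,j) ↦ M_{i,j} is a bijection from {1,…,n} × {1,…,n} onto {1,…,n²}. -/
private lemma wrap_eq_of_le {n k : ℤ} (h1 : 1 ≤ k) (h2 : k ≤ n) : wrap n k = k := by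
  unfold wrap
  rw [Int.emod_eq_of_lt (by omega) (by omega)]
  ring

private lemma wrap_eq_sub {n k : ℤ} (h1 : n + 1 ≤ k) (h2 : k ≤ 2 * n) : wrap n k = k - n := by
  unfold wrap
  have h3 : (k - 1) % n = (k - 1 - n) % n := by simp [Int.sub_emod]
  rw [h3, Int.emod_eq_of_lt (by omega) (by omega)]
  ring


/-- The map `(i,j) ↦ M i j` given by Kochański's construction is a bijection from
`{1,…,n} × {1,…,n}` onto `{1,…,n²}`. -/
theorem kochanski_bijective (n : ℕ) (hn : 3 ≤ n) (hodd : Odd n) :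
    Set.BijOn (fun p : ℕ × ℕ => kochM (n : ℤ) (((n : ℤ) + 1) / 2) (p.1 : ℤ) (p.2 : ℤ))
      (Set.Icc 1 n ×ˢ Set.Icc 1 n) (Set.Icc (1 : ℤ) ((n : ℤ) ^ 2)) := by
  classical
  obtain ⟨t0, ht0⟩ := hodd
  have hNodd : (n : ℤ) = 2 * (t0 : ℤ) + 1 := by exact_mod_cast ht0
  have hN : 3 ≤ (n : ℤ) := by exact_mod_cast hn
  set N := (n : ℤ) with hNdef
  set m := (N + 1) / 2 with hmdef
  have hm : 2 * m = N + 1 := by omega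
  have kochval : ∀ a b : ℤ,
      koch N m a b = (m - a) * (if Even b then 1 else -1) + N * (N - b) + m := fun a b => rfl
  have kochmem : ∀ a b : ℤ, 1 ≤ a → a ≤ N → 1 ≤ b → b ≤ N →
      1 ≤ koch N m a b ∧ koch N m a b ≤ N ^ 2 := by
    intro a b ha1 ha2 hb1 hb2
    rw [kochval]
    have h0 : 0 ≤ N * (N - b) := mul_nonneg (by omega) (by omega)
    have h1 : N * (N - b) ≤ N * (N - 1) := mul_le_mul_of_nonneg_left (by omega) (by omega)
    have h2 : N ^ 2 = N * (N - 1) + N := by ring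
    by_cases hb : Even b
    · rw [if_pos hb]
      constructor <;> nlinarith
    · rw [if_neg hb]
      constructor <;> nlinarith
  have kochinj : ∀ a b a' b' : ℤ, 1 ≤ a → a ≤ N → 1 ≤ b → b ≤ N →
      1 ≤ a' → a' ≤ N → 1 ≤ b' → b' ≤ N →
      koch N m a b = koch N m a' b' → a = a' ∧ b = b' := by
    intro a b a' b' ha1 ha2 hb1 hb2 ha1' ha2' hb1' hb2' heq
    rw [kochval, kochval] at heq
    set e := (if Even b then (1 : ℤ) else -1) with hedef
    set e' := (if Even b' then (1 : ℤ) else -1) with hedef'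
    have he : e = 1 ∨ e = -1 := by rw [hedef]; split <;> simp
    have he' : e' = 1 ∨ e' = -1 := by rw [hedef']; split <;> simp
    have hc : 1 ≤ (m - a) * e + m ∧ (m - a) * e + m ≤ N := by
      rcases he with h | h <;> rw [h] <;> constructor <;> omega
    have hc' : 1 ≤ (m - a') * e' + m ∧ (m - a') * e' + m ≤ N := by
      rcases he' with h | h <;> rw [h] <;> constructor <;> omega
    have hkey : N * (b - b') = ((m - a) * e + m) - ((m - a') * e' + m) := by
      linear_combination -heq
    have hbb : b = b' := by
      rcases lt_trichotomy b b' with h | h | h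
      · exfalso
        have h1 : b - b' ≤ -1 := by omega
        have h2 : N * (b - b') ≤ N * (-1) := mul_le_mul_of_nonneg_left h1 (by omega)
        have h3 : N * (-1) = -N := by ring
        linarith [hc.1, hc.2, hc'.1, hc'.2]
      · exact h
      · exfalso
        have h1 : (1 : ℤ) ≤ b - b' := by omega
        have h2 : N * 1 ≤ N * (b - b') := mul_le_mul_of_nonneg_left h1 (by omega)
        rw [mul_one] at h2
        linarith [hc.1, hc.2, hc'.1, hc'.2]
    subst hbb
    have hee : e = e' := by rw [hedef, hedef']
    refine ⟨?_, rfl⟩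
    rw [← hee] at hkey
    have hz : N * (b - b) = 0 := by ring
    have hthis : (m - a) * e = (m - a') * e := by linarith [hkey, hz]
    rcases he with h | h <;> rw [h] at hthis <;> omega
  have key : ∀ i j : ℤ, 1 ≤ i → i ≤ N → 1 ≤ j → j ≤ N →
      ∃ a b, kochM N m i j = koch N m a b ∧ 1 ≤ a ∧ a ≤ N ∧ 1 ≤ b ∧ b ≤ N ∧
        ((2 * a = i + j ∧ 2 * b = j - i + N + 1) ∨
         (∃ p q, (p = a ∨ p = a + N) ∧ (q = b ∨ q = b + N) ∧
            2 * p = i + j + N ∧ 2 * q = j - i + 2 * N + 1 ∧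
            m + 1 ≤ p ∧ p ≤ N + m - 1 ∧ m + 1 ≤ q ∧ q ≤ N + m - 1)) := by
    intro i j hi1 hi2 hj1 hj2
    by_cases hpar : Even (i + j)
    · obtain ⟨u, hu⟩ := hpar
      refine ⟨(i + j) / 2, (j - i) / 2 + m, ?_, by omega, by omega, by omega, by omega,
        Or.inl ⟨by omega, by omega⟩⟩
      unfold kochM
      rw [if_pos ⟨u, hu⟩]
    · have hodd2 : (i + j) % 2 = 1 := Int.not_even_iff.mp hpar
      have hkm : kochM N m i j
          = koch N m (wrap N ((i + j + N) / 2)) (wrap N ((j - i + N) / 2 + m)) := by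
        unfold kochM
        rw [if_neg hpar]
      have hp1 : m + 1 ≤ (i + j + N) / 2 := by omega
      have hp2 : (i + j + N) / 2 ≤ N + m - 1 := by omega
      have hq1 : m + 1 ≤ (j - i + N) / 2 + m := by omega
      have hq2 : (j - i + N) / 2 + m ≤ N + m - 1 := by omega
      have hA : ∃ a, wrap N ((i + j + N) / 2) = a ∧ 1 ≤ a ∧ a ≤ N ∧
          ((i + j + N) / 2 = a ∨ (i + j + N) / 2 = a + N) := by
        rcases le_or_gt ((i + j + N) / 2) N with h | h
        · exact ⟨_, wrap_eq_of_le (by omega) h, by omega, by omega, Or.inl rfl⟩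
        · exact ⟨_, wrap_eq_sub (by omega) (by omega), by omega, by omega, Or.inr (by omega)⟩
      have hB : ∃ b, wrap N ((j - i + N) / 2 + m) = b ∧ 1 ≤ b ∧ b ≤ N ∧
          ((j - i + N) / 2 + m = b ∨ (j - i + N) / 2 + m = b + N) := by
        rcases le_or_gt ((j - i + N) / 2 + m) N with h | h
        · exact ⟨_, wrap_eq_of_le (by omega) h, by omega, by omega, Or.inl rfl⟩
        · exact ⟨_, wrap_eq_sub (by omega) (by omega), by omega, by omega, Or.inr (by omega)⟩
      obtain ⟨a, hae, ha1, ha2, hao⟩ := hA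
      obtain ⟨b, hbe, hb1, hb2, hbo⟩ := hB
      exact ⟨a, b, by rw [hkm, hae, hbe], ha1, ha2, hb1, hb2,
        Or.inr ⟨(i + j + N) / 2, (j - i + N) / 2 + m, hao, hbo, by omega, by omega,
          hp1, hp2, hq1, hq2⟩⟩
  have ginj : ∀ i j i' j' a b : ℤ, 1 ≤ i → i ≤ N → 1 ≤ j → j ≤ N →
      1 ≤ i' → i' ≤ N → 1 ≤ j' → j' ≤ N →
      ((2 * a = i + j ∧ 2 * b = j - i + N + 1) ∨
         (∃ p q, (p = a ∨ p = a + N) ∧ (q = b ∨ q = b + N) ∧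
            2 * p = i + j + N ∧ 2 * q = j - i + 2 * N + 1 ∧
            m + 1 ≤ p ∧ p ≤ N + m - 1 ∧ m + 1 ≤ q ∧ q ≤ N + m - 1)) →
      ((2 * a = i' + j' ∧ 2 * b = j' - i' + N + 1) ∨
         (∃ p q, (p = a ∨ p = a + N) ∧ (q = b ∨ q = b + N) ∧
            2 * p = i' + j' + N ∧ 2 * q = j' - i' + 2 * N + 1 ∧
            m + 1 ≤ p ∧ p ≤ N + m - 1 ∧ m + 1 ≤ q ∧ q ≤ N + m - 1)) →
      i = i' ∧ j = j' := by
    intro i j i' j' a b hi1 hi2 hj1 hj2 hi1' hi2' hj1' hj2' h1 h2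
    rcases h1 with ⟨e1, e2⟩ | ⟨p, q, hp, hq, e1, e2, b1, b2, b3, b4⟩ <;>
      rcases h2 with ⟨f1, f2⟩ | ⟨p', q', hp', hq', f1, f2, c1, c2, c3, c4⟩
    · constructor <;> omega
    · rcases hp' with h | h <;> rcases hq' with h' | h' <;> (constructor <;> omega)
    · rcases hp with h | h <;> rcases hq with h' | h' <;> (constructor <;> omega)
    · rcases hp with h | h <;> rcases hq with h' | h' <;>
        rcases hp' with g | g <;> rcases hq' with g' | g' <;> (constructor <;> omega)
  have hMaps : ∀ i j : ℤ, 1 ≤ i → i ≤ N → 1 ≤ j → j ≤ N →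
      1 ≤ kochM N m i j ∧ kochM N m i j ≤ N ^ 2 := by
    intro i j hi1 hi2 hj1 hj2
    obtain ⟨a, b, heq, ha1, ha2, hb1, hb2, -⟩ := key i j hi1 hi2 hj1 hj2
    rw [heq]
    exact kochmem a b ha1 ha2 hb1 hb2
  have hInj : ∀ i j i' j' : ℤ, 1 ≤ i → i ≤ N → 1 ≤ j → j ≤ N →
      1 ≤ i' → i' ≤ N → 1 ≤ j' → j' ≤ N →
      kochM N m i j = kochM N m i' j' → i = i' ∧ j = j' := by
    intro i j i' j' hi1 hi2 hj1 hj2 hi1' hi2' hj1' hj2' heqv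
    obtain ⟨a, b, heq, ha1, ha2, hb1, hb2, hs⟩ := key i j hi1 hi2 hj1 hj2
    obtain ⟨a', b', heq', ha1', ha2', hb1', hb2', hs'⟩ := key i' j' hi1' hi2' hj1' hj2'
    have hv : koch N m a b = koch N m a' b' := by rw [← heq, ← heq']; exact heqv
    obtain ⟨haa, hbb⟩ := kochinj a b a' b' ha1 ha2 hb1 hb2 ha1' ha2' hb1' hb2' hv
    subst haa
    subst hbb
    exact ginj i j i' j' a b hi1 hi2 hj1 hj2 hi1' hi2' hj1' hj2' hs hs'
  refine ⟨?_, ?_, ?_⟩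
  · rintro ⟨i, j⟩ hij
    simp only [Set.mem_prod, Set.mem_Icc] at hij
    obtain ⟨⟨hi1, hi2⟩, hj1, hj2⟩ := hij
    have := hMaps (i : ℤ) (j : ℤ) (by exact_mod_cast hi1) (by rw [hNdef]; exact_mod_cast hi2)
      (by exact_mod_cast hj1) (by rw [hNdef]; exact_mod_cast hj2)
    exact Set.mem_Icc.mpr this
  · rintro ⟨i, j⟩ hij ⟨i', j'⟩ hij' heqv
    simp only [Set.mem_prod, Set.mem_Icc] at hij hij'
    obtain ⟨⟨hi1, hi2⟩, hj1, hj2⟩ := hij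
    obtain ⟨⟨hi1', hi2'⟩, hj1', hj2'⟩ := hij'
    have hv : kochM N m (i : ℤ) (j : ℤ) = kochM N m (i' : ℤ) (j' : ℤ) := heqv
    have := hInj (i : ℤ) (j : ℤ) (i' : ℤ) (j' : ℤ) (by exact_mod_cast hi1)
      (by rw [hNdef]; exact_mod_cast hi2) (by exact_mod_cast hj1) (by rw [hNdef]; exact_mod_cast hj2)
      (by exact_mod_cast hi1') (by rw [hNdef]; exact_mod_cast hi2') (by exact_mod_cast hj1')
      (by rw [hNdef]; exact_mod_cast hj2') hv
    have h1 : i = i' := by exact_mod_cast this.1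
    have h2 : j = j' := by exact_mod_cast this.2
    simp [Prod.ext_iff, h1, h2]
  · intro y hy
    have hyF : y ∈ Finset.Icc (1 : ℤ) (N ^ 2) := by
      rw [Finset.mem_Icc]
      exact Set.mem_Icc.mp hy
    have e1 : (Finset.Icc (1 : ℤ) (N ^ 2)).card = n ^ 2 := by
      rw [Int.card_Icc]
      have hcast : (N ^ 2 + 1 - 1 : ℤ) = ((n ^ 2 : ℕ) : ℤ) := by
        rw [hNdef]; push_cast; ring
      rw [hcast, Int.toNat_natCast]
    have e2 : ((Finset.Icc 1 n) ×ˢ (Finset.Icc 1 n)).card = n ^ 2 := by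
      rw [Finset.card_product, Nat.card_Icc, pow_two]
      simp
    obtain ⟨⟨i, j⟩, hps, hyeq⟩ := Finset.surj_on_of_inj_on_of_card_le
      (s := (Finset.Icc 1 n) ×ˢ (Finset.Icc 1 n)) (t := Finset.Icc (1 : ℤ) (N ^ 2))
      (fun p _ => kochM N m (p.1 : ℤ) (p.2 : ℤ))
      (by
        rintro ⟨i, j⟩ hp
        simp only [Finset.mem_product, Finset.mem_Icc] at hp
        rw [Finset.mem_Icc]
        exact hMaps (i : ℤ) (j : ℤ) (by exact_mod_cast hp.1.1) (by rw [hNdef]; exact_mod_cast hp.1.2)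
          (by exact_mod_cast hp.2.1) (by rw [hNdef]; exact_mod_cast hp.2.2))
      (by
        rintro ⟨i, j⟩ ⟨i', j'⟩ h1 h2 heq
        simp only [Finset.mem_product, Finset.mem_Icc] at h1 h2
        have := hInj (i : ℤ) (j : ℤ) (i' : ℤ) (j' : ℤ) (by exact_mod_cast h1.1.1)
          (by rw [hNdef]; exact_mod_cast h1.1.2) (by exact_mod_cast h1.2.1) (by rw [hNdef]; exact_mod_cast h1.2.2)
          (by exact_mod_cast h2.1.1) (by rw [hNdef]; exact_mod_cast h2.1.2) (by exact_mod_cast h2.2.1)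
          (by rw [hNdef]; exact_mod_cast h2.2.2) heq
        have hh1 : i = i' := by exact_mod_cast this.1
        have hh2 : j = j' := by exact_mod_cast this.2
        simp [Prod.ext_iff, hh1, hh2])
      (by rw [e1, e2]) y hyF
    simp only [Finset.mem_product, Finset.mem_Icc] at hps
    exact ⟨(i, j), Set.mem_prod.mpr ⟨Set.mem_Icc.mpr hps.1, Set.mem_Icc.mpr hps.2⟩, hyeq.symm⟩
end

section
/- Let n ≥ 3 be an odd integer, m = (n+1)/2, [k]_n = ((k−1) mod n) + 1, f(i,j) = (m−i)·(−1)^j + n(n−j) + m, and let M be the n×n matrix with M_{i,j} = f((i+j)/2, (j−i)/2 + m) if i and j have the same parity, and M_{i,j} = f([(i+j+n)/2]_n, [(j−i+n)/2 + m]_n) otherwise. Then every column of M, i.e. the sequence (M_{1,j},…,M_{n,j}) for each fixed j ∈ {1,…,n}, has residuum equal to (n²+1)/2. -/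
namespace KochAux

def iFun (n j J : ℤ) : ℤ :=
  if 2*J ≤ j then j+1-2*J else if 2*J ≤ j+n then j+n+1-2*J else j+2*n+1-2*J

lemma wrap_ge (n x : ℤ) (hn : 0 < n) : 1 ≤ wrap n x := by
  unfold wrap
  have h1 := Int.emod_nonneg (x-1) (ne_of_gt hn)
  omega

lemma wrap_le (n x : ℤ) (hn : 0 < n) : wrap n x ≤ n := by
  unfold wrap
  have h2 := Int.emod_lt_of_pos (x-1) hn
  omega

lemma wrap_eq_self (n x : ℤ) (h1 : 1 ≤ x) (h2 : x ≤ n) : wrap n x = x := by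
  unfold wrap
  rw [Int.emod_eq_of_lt (by omega) (by omega)]; omega

lemma wrap_add_n (n x : ℤ) : wrap n (x + n) = wrap n x := by
  unfold wrap
  rw [show x + n - 1 = x - 1 + n * 1 by ring, Int.add_mul_emod_self_left]

lemma key (n m j J : ℤ) (hn : 3 ≤ n) (hm : 2*m = n+1) (hj1 : 1 ≤ j) (hj2 : j ≤ n)
    (hJ1 : 1 ≤ J) (hJ2 : J ≤ n) :
    1 ≤ iFun n j J ∧ iFun n j J ≤ n ∧
      kochM n m (iFun n j J) j = koch n m (wrap n (j+m-J)) J := by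
  unfold iFun kochM
  split_ifs with h1 hev1 h2 hev2 hev3
  · exfalso; obtain ⟨r, hr⟩ := hev1; omega
  · refine ⟨by omega, by omega, ?_⟩
    have e1 : (j+1-2*J + j + n)/2 = j + m - J := by omega
    have e2 : (j - (j+1-2*J) + n)/2 + m = J + n := by omega
    rw [e1, e2, wrap_add_n, wrap_eq_self n J hJ1 hJ2]
  · refine ⟨by omega, by omega, ?_⟩
    have e1 : (j+n+1-2*J + j)/2 = j + m - J := by omega
    have e2 : (j - (j+n+1-2*J))/2 + m = J := by omega
    rw [e1, e2, wrap_eq_self n (j+m-J) (by omega) (by omega)]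
  · exact absurd ⟨j + m - J, by omega⟩ hev2
  · exfalso; obtain ⟨r, hr⟩ := hev3; omega
  · refine ⟨by omega, by omega, ?_⟩
    have e1 : (j+2*n+1-2*J + j + n)/2 = (j + m - J) + n := by omega
    have e2 : (j - (j+2*n+1-2*J) + n)/2 + m = J := by omega
    rw [e1, e2, wrap_add_n, wrap_eq_self n J hJ1 hJ2]

lemma koch_ge (n m I J : ℤ) (hm : 2*m = n+1) (hI1 : 1 ≤ I) (hI2 : I ≤ n) :
    n*(n-J)+1 ≤ koch n m I J := by
  unfold koch; split_ifs <;> linarith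

lemma koch_le (n m I J : ℤ) (hm : 2*m = n+1) (hI1 : 1 ≤ I) (hI2 : I ≤ n) :
    koch n m I J ≤ n*(n-J)+n := by
  unfold koch; split_ifs <;> linarith

lemma altSum_map_range : ∀ (n : ℕ) (f : ℕ → ℤ), ((List.range n).map f).alternatingSum
    = ∑ k ∈ Finset.range n, (-1:ℤ)^k * f k := by
  intro n
  induction n with
  | zero => intro f; simp
  | succ p ih =>
    intro f
    rw [List.range_succ_eq_map, List.map_cons, List.alternatingSum_cons, List.map_map,
        Finset.sum_range_succ' (fun k => (-1:ℤ)^k * f k) p]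
    have hmap : List.map (f ∘ Nat.succ) (List.range p)
        = List.map (fun k => f (k+1)) (List.range p) := by
      simp [Function.comp, Nat.succ_eq_add_one]
    rw [hmap, ih (fun k => f (k+1))]
    have : ∑ k ∈ Finset.range p, (-1:ℤ)^(k+1) * f (k+1)
        = - ∑ k ∈ Finset.range p, (-1:ℤ)^k * f (k+1) := by
      rw [← Finset.sum_neg_distrib]
      exact Finset.sum_congr rfl fun k _ => by ring
    rw [this]; ring

lemma sum_wrap (n : ℕ) (hn : 0 < n) (c : ℤ) :
    ∑ k ∈ Finset.range n, wrap (n:ℤ) (c - (k:ℤ)) = ∑ r ∈ Finset.range n, ((r:ℤ)+1) := by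
  have hn' : (0:ℤ) < (n:ℤ) := by exact_mod_cast hn
  have hmod : ∀ x y : ℤ, (x - y % (n:ℤ)) % (n:ℤ) = (x - y) % (n:ℤ) := by
    intro x y
    rw [Int.sub_emod, Int.emod_emod_of_dvd _ dvd_rfl, ← Int.sub_emod]
  refine Finset.sum_nbij' (fun a => ((c - 1 - (a:ℤ)) % (n:ℤ)).toNat)
    (fun b => ((c - 1 - (b:ℤ)) % (n:ℤ)).toNat) ?_ ?_ ?_ ?_ ?_
  · intro a ha
    have h1 := Int.emod_nonneg (c - 1 - (a:ℤ)) (ne_of_gt hn')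
    have h2 := Int.emod_lt_of_pos (c - 1 - (a:ℤ)) hn'
    simp only [Finset.mem_range] at *
    omega
  · intro a ha
    have h1 := Int.emod_nonneg (c - 1 - (a:ℤ)) (ne_of_gt hn')
    have h2 := Int.emod_lt_of_pos (c - 1 - (a:ℤ)) hn'
    simp only [Finset.mem_range] at *
    omega
  · intro a ha
    simp only [Finset.mem_range] at ha
    have h1 := Int.emod_nonneg (c - 1 - (a:ℤ)) (ne_of_gt hn')
    have hc : ((((c - 1 - (a:ℤ)) % (n:ℤ)).toNat : ℤ)) = (c - 1 - (a:ℤ)) % (n:ℤ) :=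
      Int.toNat_of_nonneg h1
    have : (c - 1 - ((((c - 1 - (a:ℤ)) % (n:ℤ)).toNat : ℤ))) % (n:ℤ) = (a:ℤ) := by
      rw [hc, hmod, show c - 1 - (c - 1 - (a:ℤ)) = (a:ℤ) by ring,
        Int.emod_eq_of_lt (by omega) (by exact_mod_cast ha)]
    omega
  · intro a ha
    simp only [Finset.mem_range] at ha
    have h1 := Int.emod_nonneg (c - 1 - (a:ℤ)) (ne_of_gt hn')
    have hc : ((((c - 1 - (a:ℤ)) % (n:ℤ)).toNat : ℤ)) = (c - 1 - (a:ℤ)) % (n:ℤ) :=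
      Int.toNat_of_nonneg h1
    have : (c - 1 - ((((c - 1 - (a:ℤ)) % (n:ℤ)).toNat : ℤ))) % (n:ℤ) = (a:ℤ) := by
      rw [hc, hmod, show c - 1 - (c - 1 - (a:ℤ)) = (a:ℤ) by ring,
        Int.emod_eq_of_lt (by omega) (by exact_mod_cast ha)]
    omega
  · intro a ha
    have h1 := Int.emod_nonneg (c - 1 - (a:ℤ)) (ne_of_gt hn')
    have hc : ((((c - 1 - (a:ℤ)) % (n:ℤ)).toNat : ℤ)) = (c - 1 - (a:ℤ)) % (n:ℤ) :=
      Int.toNat_of_nonneg h1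
    unfold wrap
    rw [hc, show c - (a:ℤ) - 1 = c - 1 - (a:ℤ) by ring]

lemma gauss : ∀ n : ℕ, 2 * ∑ r ∈ Finset.range n, ((r:ℤ)+1) = (n:ℤ)*((n:ℤ)+1) := by
  intro n
  induction n with
  | zero => simp
  | succ p ih =>
    rw [Finset.sum_range_succ, mul_add, ih]
    push_cast; ring

lemma altsigns : ∀ p : ℕ, ∑ k ∈ Finset.range (2*p+1), (-1:ℤ)^k * (k:ℤ) = (p:ℤ) := by
  intro p
  induction p with
  | zero => simp
  | succ q ih =>
    have h1 : 2*(q+1)+1 = (2*q+1)+1+1 := by ring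
    rw [h1, Finset.sum_range_succ, Finset.sum_range_succ, ih]
    have e1 : (-1:ℤ)^(2*q+1) = -1 := Odd.neg_one_pow ⟨q, by ring⟩
    have e2 : (-1:ℤ)^(2*q+1+1) = 1 := Even.neg_one_pow ⟨q+1, by ring⟩
    rw [e1, e2]; push_cast; ring

end KochAux

/-- Every column of Kochański's matrix has residuum `(n²+1)/2`. -/
theorem kochanski_cols (n : ℕ) (hn : 3 ≤ n) (hodd : Odd n)
    (j : ℕ) (hj : j ∈ Finset.Icc 1 n) :
    res (colList n (fun a b => kochM (n : ℤ) (((n : ℤ) + 1) / 2) (a : ℤ) (b : ℤ)) j)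
      = ((n : ℤ) ^ 2 + 1) / 2 := by
  obtain ⟨t, ht⟩ := hodd
  simp only [Finset.mem_Icc] at hj
  set N : ℤ := (n : ℤ) with hN
  have hN3 : 3 ≤ N := by rw [hN]; exact_mod_cast hn
  have hNt : N = 2*(t:ℤ)+1 := by rw [hN, ht]; push_cast; ring
  set m : ℤ := (N+1)/2 with hmdef
  have hm : 2*m = N+1 := by omega
  have hj1 : 1 ≤ (j:ℤ) := by exact_mod_cast hj.1
  have hj2 : (j:ℤ) ≤ N := by rw [hN]; exact_mod_cast hj.2
  set g : ℕ → ℤ := fun a => kochM N m ((a:ℤ)+1) (j:ℤ) with hg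
  set e : ℕ → ℤ := fun k => koch N m (wrap N ((j:ℤ)+m-((k:ℤ)+1))) ((k:ℤ)+1) with he
  set σ : ℕ → ℕ := fun k => (KochAux.iFun N (j:ℤ) ((k:ℤ)+1)).toNat - 1 with hσ
  have hkey : ∀ k, k < n → 1 ≤ KochAux.iFun N (j:ℤ) ((k:ℤ)+1)
      ∧ KochAux.iFun N (j:ℤ) ((k:ℤ)+1) ≤ N
      ∧ kochM N m (KochAux.iFun N (j:ℤ) ((k:ℤ)+1)) (j:ℤ) = e k := by
    intro k hk
    have h2 : ((k:ℤ)+1) ≤ N := by rw [hN]; exact_mod_cast hk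
    exact KochAux.key N m (j:ℤ) ((k:ℤ)+1) hN3 hm hj1 hj2 (by omega) h2
  have hσspec : ∀ k, k < n → σ k < n ∧ ((σ k : ℤ) + 1 = KochAux.iFun N (j:ℤ) ((k:ℤ)+1)) := by
    intro k hk
    obtain ⟨h1, h2, _⟩ := hkey k hk
    constructor
    · rw [hσ]; dsimp only; omega
    · rw [hσ]; dsimp only; omega
  have hgσ : ∀ k, k < n → g (σ k) = e k := by
    intro k hk
    obtain ⟨_, _, h3⟩ := hkey k hk
    rw [hg]; dsimp only
    rw [(hσspec k hk).2, h3]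
  -- bounds
  have hwge : ∀ x : ℤ, 1 ≤ wrap N x := fun x => KochAux.wrap_ge N x (by omega)
  have hwle : ∀ x : ℤ, wrap N x ≤ N := fun x => KochAux.wrap_le N x (by omega)
  have hebd : ∀ k : ℕ, N*(N-((k:ℤ)+1))+1 ≤ e k ∧ e k ≤ N*(N-((k:ℤ)+1))+N := by
    intro k
    rw [he]; dsimp only
    exact ⟨KochAux.koch_ge N m _ _ hm (hwge _) (hwle _),
      KochAux.koch_le N m _ _ hm (hwge _) (hwle _)⟩
  have hstrict : ∀ k k' : ℕ, k < k' → e k' < e k := by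
    intro k k' hkk
    obtain ⟨hb1, _⟩ := hebd k
    obtain ⟨_, hb2⟩ := hebd k'
    have h1 : ((k:ℤ)) + 1 ≤ (k':ℤ) := by exact_mod_cast hkk
    have hNk : N * 1 ≤ N * ((k':ℤ) - (k:ℤ)) :=
      mul_le_mul_of_nonneg_left (by linarith) (by linarith)
    nlinarith [hb1, hb2, hNk]
  -- T and perm
  set T : List ℤ := (List.range n).map e with hT
  have hcol : colList n (fun a b => kochM N m (a:ℤ) (b:ℤ)) j = (List.range n).map g := by
    unfold colList
    apply List.map_congr_left
    intro i _
    rw [hg]; dsimp only; push_cast; ring_nf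
  have hσinj : ∀ x ∈ List.range n, ∀ y ∈ List.range n, σ x = σ y → x = y := by
    intro x hx y hy hxy
    simp only [List.mem_range] at hx hy
    by_contra hne
    have hexy : e x = e y := by rw [← hgσ x hx, ← hgσ y hy, hxy]
    rcases Nat.lt_or_ge x y with h | h
    · exact absurd hexy (ne_of_gt (hstrict x y h))
    · have h' : y < x := by omega
      exact absurd hexy (ne_of_lt (hstrict y x h'))
  have hnod : ((List.range n).map σ).Nodup :=
    List.nodup_range.map_on hσinj
  have hsub : ∀ x ∈ (List.range n).map σ, x ∈ List.range n := by
    intro x hx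
    simp only [List.mem_map, List.mem_range] at hx ⊢
    obtain ⟨k, hk, rfl⟩ := hx
    exact (hσspec k hk).1
  have hperm0 : ((List.range n).map σ).Perm (List.range n) :=
    (List.subperm_of_subset hnod hsub).perm_of_length_le (by simp)
  have hTeq : T = (List.range n).map (g ∘ σ) := by
    rw [hT]
    apply List.map_congr_left
    intro k hk
    simp only [List.mem_range] at hk
    exact ((hgσ k hk)).symm.trans rfl
  have hperm : ((List.range n).map g).Perm T := by
    rw [hTeq, ← List.map_map]
    exact (hperm0.map g).symm
  -- sortedness of T
  have hsort : T.Pairwise (· ≥ ·) := by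
    rw [List.pairwise_iff_getElem]
    intro a b ha hb hab
    simp only [hT, List.length_map, List.length_range] at ha hb
    simp only [hT, List.getElem_map, List.getElem_range]
    exact le_of_lt (hstrict a b hab)
  -- identify the sorted list
  have hins : (colList n (fun a b => kochM N m (a:ℤ) (b:ℤ)) j).insertionSort (· ≥ ·) = T := by
    apply List.Perm.eq_of_pairwise' (List.pairwise_insertionSort _ _) hsort
    exact (List.perm_insertionSort _ _).trans (by rw [hcol]; exact hperm)
  unfold res
  rw [hins, hT, KochAux.altSum_map_range]
  -- pointwise rewriting of the summand
  have hpt : ∀ k : ℕ, (-1:ℤ)^k * e k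
      = (wrap N ((j:ℤ)+m-1 - (k:ℤ)) - m) + (-1:ℤ)^k * (N*(N-1-(k:ℤ)) + m) := by
    intro k
    have harg : (j:ℤ)+m-((k:ℤ)+1) = (j:ℤ)+m-1-(k:ℤ) := by ring
    rw [he]; dsimp only
    rw [harg]
    unfold koch
    rcases Nat.even_or_odd k with hk | hk
    · rw [if_neg (by rw [Int.even_add_one, not_not]; exact_mod_cast hk), hk.neg_one_pow]
      ring
    · rw [if_pos (by rw [Int.even_add_one]; simpa using (Nat.not_even_iff_odd.mpr hk)),
          hk.neg_one_pow]
      ring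
  rw [Finset.sum_congr rfl (fun k _ => hpt k), Finset.sum_add_distrib, Finset.sum_sub_distrib]
  rw [KochAux.sum_wrap n (by omega) ((j:ℤ)+m-1)]
  have hg2 : ∑ r ∈ Finset.range n, ((r:ℤ)+1) = N*m := by
    have h1 := KochAux.gauss n
    have h2 : N*(N+1) = 2*(N*m) := by rw [← hm]; ring
    rw [← hN] at h1
    linarith
  rw [hg2]
  simp only [Finset.sum_const, Finset.card_range, nsmul_eq_mul]
  have hexp : ∀ k : ℕ, (-1:ℤ)^k * (N*(N-1-(k:ℤ))+m)
      = (N*(N-1)+m) * (-1:ℤ)^k - N * ((-1:ℤ)^k * (k:ℤ)) := fun k => by ring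
  rw [Finset.sum_congr rfl (fun k _ => hexp k), Finset.sum_sub_distrib,
      ← Finset.mul_sum, ← Finset.mul_sum]
  have hA : ∑ k ∈ Finset.range n, (-1:ℤ)^k = 1 := by
    rw [neg_one_geom_sum, if_neg (by rw [Nat.even_iff]; omega)]
  have hB : ∑ k ∈ Finset.range n, (-1:ℤ)^k * (k:ℤ) = (t:ℤ) := by
    rw [ht]; exact KochAux.altsigns t
  rw [hA, hB]
  have hrhs : (N^2+1)/2 = 2*(t:ℤ)^2+2*(t:ℤ)+1 := by
    rw [hNt, show ((2*(t:ℤ)+1)^2+1) = 2*(2*(t:ℤ)^2+2*(t:ℤ)+1) by ring,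
        Int.mul_ediv_cancel_left _ (by norm_num)]
  rw [hrhs]
  have hmt : m = (t:ℤ)+1 := by omega
  rw [hNt, hmt, ht]
  push_cast
  ring
end

section
/- Let n ≥ 3 be an odd integer, m = (n+1)/2, [k]_n = ((k−1) mod n) + 1, f(i,j) = (m−i)·(−1)^j + n(n−j) + m, and let M be the n×n matrix with M_{i,j} = f((i+j)/2, (j−i)/2 + m) if i and j have the same parity, and M_{i,j} = f([(i+j+n)/2]_n, [(j−i+n)/2 + m]_n) otherwise. Then the main diagonal (M_{1,1},…,M_{n,n}) and the antidiagonal (M_{1,n}, M_{2,n−1},…,M_{n,1}) of M each have residuum equal to (n²+1)/2. -/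
lemma alt_step' (n : ℕ) (f : ℕ → ℤ) :
    ((List.range (n+1)).map f).alternatingSum
      = f 0 - ((List.range n).map (fun i => f (i+1))).alternatingSum := by
  rw [List.range_succ_eq_map, List.map_cons, List.map_map, List.alternatingSum_cons]
  rfl

lemma alt_arith' (k : ℕ) : ∀ (b d : ℤ),
    ((List.range (2*k+1)).map (fun i : ℕ => b - d * i)).alternatingSum = b - d * k := by
  induction k with
  | zero => intro b d; simp [List.range_succ]
  | succ k ih =>
    intro b d
    have h : 2*(k+1)+1 = (2*k+1) + 1 + 1 := by ring
    rw [h, alt_step', alt_step']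
    have hc : (List.range (2*k+1)).map (fun i => b - d * ((i:ℕ)+1+1 : ℕ))
        = (List.range (2*k+1)).map (fun i : ℕ => (b - 2*d) - d * i) := by
      apply List.map_congr_left
      intro i _
      push_cast
      ring
    rw [hc, ih (b - 2*d) d]
    push_cast
    ring

lemma map_range_reverse' (f : ℕ → ℤ) (n : ℕ) : ((List.range n).map f).reverse
    = (List.range n).map (fun i => f (n - 1 - i)) := by
  induction n with
  | zero => simp
  | succ n ih =>
    have hR : (List.range (n+1)).map (fun i => f (n + 1 - 1 - i))
        = f n :: (List.range n).map (fun i => f (n - 1 - i)) := by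
      rw [List.range_succ_eq_map, List.map_cons, List.map_map]
      simp only [Nat.add_sub_cancel, Nat.sub_zero]
      congr 1
      apply List.map_congr_left
      intro i _
      simp only [Function.comp]
      congr 1
      omega
    rw [hR, List.range_succ, List.map_append, List.reverse_append, ih]
    simp

lemma res_perm' {l l' : List ℤ} (h : l.Perm l') : res l = res l' := by
  unfold res
  congr 1
  refine (fun hp hs1 hs2 => List.Perm.eq_of_pairwise' (r := (· ≥ ·)) hs1 hs2 hp) ?_ ?_ ?_
  · exact (List.perm_insertionSort _ l).trans (h.trans (List.perm_insertionSort _ l').symm)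
  · exact List.pairwise_insertionSort _ l
  · exact List.pairwise_insertionSort _ l'

lemma sorted_dec' (n : ℕ) (b d : ℤ) (hd : 0 ≤ d) :
    List.Pairwise (· ≥ ·) ((List.range n).map (fun i : ℕ => b - d * i)) := by
  rw [List.pairwise_map]
  refine (List.pairwise_lt_range (n := n)).imp ?_
  intro a c h
  have h1 : (a : ℤ) ≤ c := by exact_mod_cast h.le
  have h2 := mul_le_mul_of_nonneg_left h1 hd
  omega

lemma res_dec' (n : ℕ) (f : ℕ → ℤ) (b d : ℤ) (hd : 0 ≤ d)
    (hf : ∀ i < n, f i = b - d * i) :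
    res ((List.range n).map f)
      = ((List.range n).map (fun i : ℕ => b - d * i)).alternatingSum := by
  have hL : (List.range n).map f = (List.range n).map (fun i : ℕ => b - d * i) :=
    List.map_congr_left (fun i hi => hf i (List.mem_range.mp hi))
  rw [hL]
  unfold res
  rw [List.Pairwise.insertionSort_eq (sorted_dec' n b d hd)]

lemma res_inc' (n : ℕ) (f : ℕ → ℤ) (b d : ℤ) (hd : 0 ≤ d)
    (hf : ∀ i < n, f i = b - d * ((n:ℤ) - 1 - i)) :
    res ((List.range n).map f)
      = ((List.range n).map (fun i : ℕ => b - d * i)).alternatingSum := by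
  have hperm : ((List.range n).map f).Perm ((List.range n).map (fun i => f (n - 1 - i))) := by
    rw [← map_range_reverse']
    exact (List.reverse_perm _).symm
  rw [res_perm' hperm]
  apply res_dec' n _ b d hd
  intro i hi
  rw [hf (n - 1 - i) (by omega)]
  have hc : ((n:ℤ) - 1 - ((n - 1 - i : ℕ):ℤ)) = (i:ℤ) := by omega
  rw [hc]

/-- The main diagonal and the antidiagonal of Kochański's matrix each have
residuum `(n²+1)/2`. -/
theorem kochanski_diags (n : ℕ) (hn : 3 ≤ n) (hodd : Odd n) :
    res (diagList n (fun a b => kochM (n : ℤ) (((n : ℤ) + 1) / 2) (a : ℤ) (b : ℤ)))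
        = ((n : ℤ) ^ 2 + 1) / 2 ∧
    res (adiagList n (fun a b => kochM (n : ℤ) (((n : ℤ) + 1) / 2) (a : ℤ) (b : ℤ)))
        = ((n : ℤ) ^ 2 + 1) / 2 := by
  obtain ⟨k, hk⟩ := hodd
  have hn' : (n:ℤ) = 2*(k:ℤ)+1 := by push_cast [hk]; ring
  have hm : ((n:ℤ)+1)/2 = (k:ℤ)+1 := by omega
  have hrhs : ((n:ℤ)^2+1)/2 = 2*(k:ℤ)^2+2*(k:ℤ)+1 := by
    have h1 : (n:ℤ)^2 = 4*((k:ℤ)*(k:ℤ))+4*(k:ℤ)+1 := by rw [hn']; ring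
    have h2 : (k:ℤ)^2 = (k:ℤ)*(k:ℤ) := sq (k:ℤ) ▸ rfl
    rw [h1, h2]
    omega
  have hdiag : ∀ i, kochM (n:ℤ) (((n:ℤ)+1)/2) ((i+1:ℕ):ℤ) ((i+1:ℕ):ℤ)
      = ((((n:ℤ)+1)/2) - ((i:ℤ)+1)) * (if Even (((n:ℤ)+1)/2) then 1 else (-1:ℤ))
        + (n:ℤ)*((n:ℤ) - (((n:ℤ)+1)/2)) + (((n:ℤ)+1)/2) := by
    intro i
    rw [kochM, if_pos ⟨((i:ℤ)+1), by push_cast; ring⟩]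
    have h1 : (((i+1:ℕ):ℤ) + ((i+1:ℕ):ℤ))/2 = (i:ℤ)+1 := by push_cast; omega
    have h2 : ((((i+1:ℕ):ℤ)) - ((i+1:ℕ):ℤ))/2 + ((n:ℤ)+1)/2 = ((n:ℤ)+1)/2 := by
      push_cast; omega
    rw [h1, h2, koch]
  have hadiag : ∀ i < n, kochM (n:ℤ) (((n:ℤ)+1)/2) ((i+1:ℕ):ℤ) ((n - i:ℕ):ℤ)
      = (((n:ℤ)+1)/2) + (n:ℤ)*(i:ℤ) := by
    intro i hi
    have hni : ((n - i : ℕ):ℤ) = (n:ℤ) - (i:ℤ) := by omega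
    rw [kochM, hni, if_pos ⟨(k:ℤ)+1, by push_cast; omega⟩]
    have h1 : (((i+1:ℕ):ℤ) + ((n:ℤ) - (i:ℤ)))/2 = (k:ℤ)+1 := by push_cast; omega
    have h2 : (((n:ℤ) - (i:ℤ)) - ((i+1:ℕ):ℤ))/2 + ((n:ℤ)+1)/2
        = ((k:ℤ) - (i:ℤ)) + ((k:ℤ)+1) := by push_cast; omega
    rw [h1, h2, koch, hm]
    have h3 : (n:ℤ) - (((k:ℤ) - (i:ℤ)) + ((k:ℤ)+1)) = (i:ℤ) := by omega
    rw [h3]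
    ring
  constructor
  · rw [diagList]
    by_cases hE : Even (((n:ℤ)+1)/2)
    · refine (res_dec' n _ ((((n:ℤ)+1)/2) - 1 + (n:ℤ)*((n:ℤ) - (((n:ℤ)+1)/2)) + (((n:ℤ)+1)/2)) 1
        (by norm_num) (fun i _ => by rw [hdiag i, if_pos hE]; ring)).trans ?_
      have ha := alt_arith' k ((((n:ℤ)+1)/2) - 1 + (n:ℤ)*((n:ℤ) - (((n:ℤ)+1)/2)) + (((n:ℤ)+1)/2)) 1
      rw [← hk] at ha
      rw [ha, hrhs, hm, hn']
      ring
    · refine (res_inc' n _ (((n:ℤ) - (((n:ℤ)+1)/2)) + (n:ℤ)*((n:ℤ) - (((n:ℤ)+1)/2)) + (((n:ℤ)+1)/2)) 1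
        (by norm_num) (fun i _ => by rw [hdiag i, if_neg hE]; ring)).trans ?_
      have ha := alt_arith' k (((n:ℤ) - (((n:ℤ)+1)/2)) + (n:ℤ)*((n:ℤ) - (((n:ℤ)+1)/2)) + (((n:ℤ)+1)/2)) 1
      rw [← hk] at ha
      rw [ha, hrhs, hm, hn']
      ring
  · rw [adiagList]
    refine (res_inc' n _ ((((n:ℤ)+1)/2) + (n:ℤ)*((n:ℤ)-1)) (n:ℤ)
      (by positivity) (fun i hi => by rw [hadiag i hi]; ring)).trans ?_
    have ha := alt_arith' k ((((n:ℤ)+1)/2) + (n:ℤ)*((n:ℤ)-1)) (n:ℤ)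
    rw [← hk] at ha
    rw [ha, hrhs, hm, hn']
    ring
end

section
/- Let n ≥ 3 be an odd integer, m = (n+1)/2, and f(i,j) = (m−i)·(−1)^j + n(n−j) + m. For each p with 0 ≤ p ≤ n−1 define the sequence g_p(i) = f(p+i, i) for 1 ≤ i ≤ n−p and g_p(i) = f(p+i−n, i) for n−p+1 ≤ i ≤ n. Then g_p is strictly decreasing in i, and Σ_{i=1}^{n} (−1)^{i+1} g_p(i) = (n²+1)/2. -/
lemma koch_lin_sum (k : ℕ) (c d : ℤ) :
    ∑ i ∈ Finset.Icc 1 (2*k+1), (c + d*(i:ℤ)) = (2*(k:ℤ)+1)*c + d*((2*(k:ℤ)+1)*((k:ℤ)+1)) := by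
  induction k with
  | zero => simp
  | succ k ih =>
    rw [show 2*(k+1)+1 = (2*k+1)+1+1 from by ring,
      Finset.sum_Icc_succ_top (by omega), Finset.sum_Icc_succ_top (by omega), ih]
    push_cast; ring

lemma koch_alt_sum (k : ℕ) (c d : ℤ) :
    ∑ i ∈ Finset.Icc 1 (2*k+1), (-1:ℤ)^(i+1) * (c + d*(i:ℤ)) = c + d*((k:ℤ)+1) := by
  induction k with
  | zero => norm_num
  | succ k ih =>
    rw [show 2*(k+1)+1 = (2*k+1)+1+1 from by ring,
      Finset.sum_Icc_succ_top (by omega), Finset.sum_Icc_succ_top (by omega), ih]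
    have e1 : ((-1:ℤ))^(2*k+1+1+1) = -1 := Odd.neg_one_pow ⟨k+1, by ring⟩
    have e2 : ((-1:ℤ))^(2*k+1+1+1+1) = 1 := Even.neg_one_pow ⟨k+2, by ring⟩
    rw [e1, e2]; push_cast; ring

/-- For odd `n ≥ 3`, `m = (n+1)/2` and `0 ≤ p ≤ n-1`, the sequence
`g i = f(p+i, i)` for `1 ≤ i ≤ n-p` and `g i = f(p+i-n, i)` for `n-p+1 ≤ i ≤ n`
is strictly decreasing on `{1,…,n}`, and `∑_{i=1}^n (-1)^{i+1} g i = (n²+1)/2`. -/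
theorem kochanski_row_sorted_and_residuum (n : ℕ) (hn : 3 ≤ n) (hodd : Odd n)
    (m : ℤ) (hm : m = ((n : ℤ) + 1) / 2) (p : ℕ) (hp : p ≤ n - 1)
    (g : ℕ → ℤ)
    (hg : ∀ i ∈ Finset.Icc 1 n,
      g i = if (i : ℤ) ≤ (n : ℤ) - (p : ℤ)
            then koch (n : ℤ) m ((p : ℤ) + (i : ℤ)) (i : ℤ)
            else koch (n : ℤ) m ((p : ℤ) + (i : ℤ) - (n : ℤ)) (i : ℤ)) :
    StrictAntiOn g (Set.Icc 1 n) ∧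
    ∑ i ∈ Finset.Icc 1 n, (-1 : ℤ) ^ (i + 1) * g i = ((n : ℤ) ^ 2 + 1) / 2 := by
  obtain ⟨k, hk⟩ := hodd
  have hn2 : (n:ℤ) = 2*(k:ℤ)+1 := by omega
  have hmk : m = (k:ℤ)+1 := by
    rw [hm, show (n:ℤ)+1 = 2*((k:ℤ)+1) from by omega,
      Int.mul_ediv_cancel_left _ (by norm_num)]
  constructor
  · -- strict antitonicity
    have step : ∀ i, 1 ≤ i → i < n → g (i+1) < g i := by
      intro i h1 h2
      rw [hg i (by simp; omega), hg (i+1) (by simp; omega)]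
      simp only [koch]
      have hI1 : (1:ℤ) ≤ (i:ℤ) := by exact_mod_cast h1
      have hIn : (i:ℤ) < (n:ℤ) := by exact_mod_cast h2
      have hpn : (p:ℤ) ≤ (n:ℤ) - 1 := by omega
      have hp0 : (0:ℤ) ≤ (p:ℤ) := by positivity
      push_cast
      have hpar : (if Even ((i:ℤ)+1) then (1:ℤ) else -1) = -(if Even (i:ℤ) then 1 else -1) := by
        by_cases h : Even (i:ℤ) <;> simp [Int.even_add_one, h]
        · exact_mod_cast h
        · exact Nat.not_even_iff_odd.mp (by exact_mod_cast h)
      rw [hpar]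
      have he : (if Even (i:ℤ) then (1:ℤ) else -1) = 1 ∨ (if Even (i:ℤ) then (1:ℤ) else -1) = -1 := by
        by_cases h : Even (i:ℤ) <;> simp [h]
      set e := (if Even (i:ℤ) then (1:ℤ) else -1) with hedef
      split_ifs with c1 c2 c2
      · rcases he with h | h <;> rw [h] <;> ring_nf <;> nlinarith [hmk, hn2]
      · exfalso; omega
      · rcases he with h | h <;> rw [h] <;> ring_nf <;> nlinarith [hmk, hn2]
      · rcases he with h | h <;> rw [h] <;> ring_nf <;> nlinarith [hmk, hn2]
    intro a ha b hb hab
    have key : ∀ b, a + 1 ≤ b → b ≤ n → g b < g a := by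
      intro b
      induction b with
      | zero => omega
      | succ c ih =>
        intro hc hcn
        rcases Nat.lt_or_ge a c with h | h
        · exact lt_trans (step c (by omega) (by omega)) (ih (by omega) (by omega))
        · have : a = c := by omega
          subst this
          exact step a ha.1 (by omega)
    exact key b hab hb.2
  · -- the alternating sum
    have hterm : ∀ i ∈ Finset.Icc 1 n, (-1:ℤ)^(i+1) * g i
        = ((if (i:ℤ) ≤ (n:ℤ)-(p:ℤ) then (0:ℤ) else -(n:ℤ)) + (((p:ℤ) - m) + 1*(i:ℤ)))
          + (-1:ℤ)^(i+1) * ((((n:ℤ)^2 + m)) + (-(n:ℤ))*(i:ℤ)) := by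
      intro i hi
      rw [hg i hi]
      simp only [koch]
      rcases Nat.even_or_odd i with hpe | hpo
      · have h1 : ((-1:ℤ))^(i+1) = -1 := Odd.neg_one_pow (Even.add_one hpe)
        have h2 : Even (i:ℤ) := by exact_mod_cast hpe
        simp only [if_pos h2]
        split_ifs <;> rw [h1] <;> ring
      · have h1 : ((-1:ℤ))^(i+1) = 1 := Even.neg_one_pow (Odd.add_one hpo)
        have h2 : ¬ Even (i:ℤ) := by
          simpa [Int.not_even_iff_odd] using (by exact_mod_cast hpo : Odd (i:ℤ))
        simp only [if_neg h2]
        split_ifs <;> rw [h1] <;> ring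
    rw [Finset.sum_congr rfl hterm, Finset.sum_add_distrib, Finset.sum_add_distrib]
    have hA : ∑ i ∈ Finset.Icc 1 n, (if (i:ℤ) ≤ (n:ℤ)-(p:ℤ) then (0:ℤ) else -(n:ℤ))
        = -(n:ℤ)*(p:ℤ) := by
      have hcond : ∀ i : ℕ, ((i:ℤ) ≤ (n:ℤ)-(p:ℤ)) ↔ i ≤ n - p := by intro i; omega
      simp only [hcond]
      rw [show Finset.Icc 1 n = Finset.Ioc 0 n from Finset.Icc_add_one_left_eq_Ioc 0 n,
        ← Finset.sum_Ioc_consecutive _ (Nat.zero_le (n-p)) (by omega : n - p ≤ n)]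
      rw [Finset.sum_eq_zero (fun i hi => if_pos (Finset.mem_Ioc.mp hi).2),
        Finset.sum_congr rfl (fun i hi => if_neg (by have := (Finset.mem_Ioc.mp hi).1; omega)),
        Finset.sum_const, Nat.card_Ioc]
      have : n - (n - p) = p := by omega
      rw [this]
      push_cast [nsmul_eq_mul]; ring
    rw [hA]
    have hB := koch_lin_sum k ((p:ℤ) - m) 1
    have hC := koch_alt_sum k ((n:ℤ)^2 + m) (-(n:ℤ))
    rw [hk] at *
    rw [hB, hC]
    have hRHS : (((2*k+1:ℕ):ℤ)^2+1)/2 = 2*(k:ℤ)^2+2*(k:ℤ)+1 := by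
      rw [show ((2*k+1:ℕ):ℤ)^2+1 = 2*(2*(k:ℤ)^2+2*(k:ℤ)+1) from by push_cast; ring,
        Int.mul_ediv_cancel_left _ (by norm_num)]
    rw [hRHS, hmk]
    push_cast at hn2 ⊢
    rw [hn2]
    ring
end

section
/- Let P be a normal magic square of subtraction of order 4 with residuum r, and let k ≥ 1 be an integer. Define the 4k × 4k matrix Q by Q_{4(u−1)+a, 4(v−1)+b} = P_{a,b} + 16·(k(u−1) + v − 1) for u, v ∈ {1,…,k} and a, b ∈ {1,…,4}. Then Q is a normal magic square of subtraction of order 4k with residuum k·r. -/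
namespace CompositeAux

lemma alt_append : ∀ (l₁ l₂ : List ℤ), Even l₁.length →
    (l₁ ++ l₂).alternatingSum = l₁.alternatingSum + l₂.alternatingSum
  | [], l₂, _ => by simp
  | [a], _, h => by simp at h
  | a :: b :: t, l₂, h => by
    have ht : Even t.length := by
      simpa [Nat.even_add_one, parity_simps] using h
    have : ((a :: b :: t) ++ l₂) = a :: b :: (t ++ l₂) := rfl
    rw [this]
    show a + -b + (t ++ l₂).alternatingSum = (a + -b + t.alternatingSum) + l₂.alternatingSum
    rw [alt_append t l₂ ht]; ring

lemma alt_map : ∀ (l : List ℤ) (c : ℤ), Even l.length →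
    (l.map (· + c)).alternatingSum = l.alternatingSum
  | [], _, _ => by simp
  | [a], _, h => by simp at h
  | a :: b :: t, c, h => by
    have ht : Even t.length := by
      simpa [Nat.even_add_one, parity_simps] using h
    show (a + c) + -(b + c) + ((t.map (· + c)).alternatingSum)
        = a + -b + t.alternatingSum
    rw [alt_map t c ht]; ring

lemma res_perm {l l' : List ℤ} (h : l.Perm l') : res l = res l' := by
  unfold res
  congr 1
  exact List.Perm.eq_of_pairwise'
    (List.pairwise_insertionSort _ l) (List.pairwise_insertionSort _ l')
    ((List.perm_insertionSort _ l).trans (h.trans (List.perm_insertionSort _ l').symm))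

lemma res_append (l₁ l₂ : List ℤ) (h : ∀ x ∈ l₁, ∀ y ∈ l₂, x ≤ y)
    (he : Even l₂.length) : res (l₁ ++ l₂) = res l₁ + res l₂ := by
  set s₁ := l₁.insertionSort (· ≥ ·) with hs₁
  set s₂ := l₂.insertionSort (· ≥ ·) with hs₂
  have p₁ : s₁.Perm l₁ := List.perm_insertionSort _ l₁
  have p₂ : s₂.Perm l₂ := List.perm_insertionSort _ l₂
  have sorted₁ : s₁.Pairwise (· ≥ ·) := List.pairwise_insertionSort _ l₁
  have sorted₂ : s₂.Pairwise (· ≥ ·) := List.pairwise_insertionSort _ l₂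
  have hs : (s₂ ++ s₁).Pairwise (· ≥ ·) := by
    rw [List.pairwise_append]
    refine ⟨sorted₂, sorted₁, fun y hy x hx => h x (p₁.mem_iff.mp hx) y (p₂.mem_iff.mp hy)⟩
  have hperm : (l₁ ++ l₂).Perm (s₂ ++ s₁) :=
    ((p₁.append p₂).symm).trans (List.perm_append_comm)
  have he₂ : Even s₂.length := by rwa [p₂.length_eq]
  rw [res_perm hperm]
  unfold res
  rw [List.Pairwise.insertionSort_eq hs, alt_append _ _ he₂]
  ring

lemma res_map_add (l : List ℤ) (c : ℤ) (h : Even l.length) :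
    res (l.map (· + c)) = res l := by
  set s := l.insertionSort (· ≥ ·) with hs
  have sorted : s.Pairwise (· ≥ ·) := List.pairwise_insertionSort _ l
  have sorted' : (s.map (· + c)).Pairwise (· ≥ ·) :=
    List.Pairwise.map _ (fun a b (hab : a ≥ b) => by simp [ge_iff_le]; linarith) sorted
  have hperm : (l.map (· + c)).Perm (s.map (· + c)) :=
    ((List.perm_insertionSort _ l).map _).symm
  rw [res_perm hperm]
  unfold res
  rw [List.Pairwise.insertionSort_eq sorted']
  have hes : Even s.length := by rwa [(List.perm_insertionSort (· ≥ ·) l).length_eq]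
  rw [alt_map _ _ hes]

lemma res_nil : res [] = 0 := rfl

lemma res_blocks (r : ℤ) : ∀ (k : ℕ) (B : ℕ → List ℤ),
    (∀ v, v < k → (B v).length = 4) →
    (∀ v w, v < w → w < k → ∀ x ∈ B v, ∀ y ∈ B w, x ≤ y) →
    (∀ v, v < k → res (B v) = r) →
    res ((List.range k).map B).flatten = (k : ℤ) * r
  | 0, B, _, _, _ => by simp [res_nil]
  | (k+1), B, hlen, hsep, hres => by
    rw [List.range_succ, List.map_append, List.flatten_append]
    have hflat : ((List.map B [k]).flatten) = B k := by simp
    rw [hflat]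
    rw [res_append _ _ ?_ ?_]
    · rw [res_blocks r k B (fun v hv => hlen v (by omega))
        (fun v w hvw hw => hsep v w hvw (by omega)) (fun v hv => hres v (by omega)),
        hres k (by omega)]
      push_cast; ring
    · intro x hx y hy
      rw [List.mem_flatten] at hx
      obtain ⟨l, hl, hxl⟩ := hx
      rw [List.mem_map] at hl
      obtain ⟨v, hv, rfl⟩ := hl
      rw [List.mem_range] at hv
      exact hsep v k hv (by omega) x hxl y hy
    · rw [hlen k (by omega)]; decide

lemma range_mul_map (g : ℕ → ℤ) : ∀ k : ℕ,
    (List.range (4*k)).map g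
      = ((List.range k).map (fun v => (List.range 4).map (fun t => g (4*v+t)))).flatten
  | 0 => by simp
  | (k+1) => by
    have h4 : 4*(k+1) = 4*k + 4 := by ring
    rw [h4, List.range_add, List.map_append]
    rw [show List.range (k+1) = List.range k ++ [k] from List.range_succ (n := k)]
    rw [List.map_append, List.flatten_append, ← range_mul_map g k]
    congr 1


/-- Main line lemma. -/
lemma res_line (k : ℕ) (g : ℕ → ℤ) (base : ℕ → ℤ) (c : ℕ → ℤ) (r : ℤ)
    (hval : ∀ t, t < 4 → 1 ≤ base t ∧ base t ≤ 16)
    (hres : res ((List.range 4).map base) = r)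
    (hc : ∀ v w, v < w → w < k → c v + 16 ≤ c w + 1)
    (hg : ∀ v, v < k → ∀ t, t < 4 → g (4*v + t) = base t + c v) :
    res ((List.range (4*k)).map g) = (k : ℤ) * r := by
  rw [range_mul_map]
  have hB : ∀ v, v < k → (List.range 4).map (fun t => g (4*v+t))
      = ((List.range 4).map base).map (· + c v) := by
    intro v hv
    rw [List.map_map]
    apply List.map_congr_left
    intro t ht
    rw [List.mem_range] at ht
    exact hg v hv t ht
  apply res_blocks
  · intro v hv; simp
  · intro v w hvw hw x hx y hy
    rw [hB v (by omega), List.map_map, List.mem_map] at hx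
    rw [hB w hw, List.map_map, List.mem_map] at hy
    obtain ⟨t, ht, rfl⟩ := hx
    obtain ⟨s, hs, rfl⟩ := hy
    rw [List.mem_range] at ht hs
    have h1 := hval t ht
    have h2 := hval s hs
    have h3 := hc v w hvw hw
    simp only [Function.comp_apply]
    linarith
  · intro v hv
    rw [hB v hv, res_map_add _ _ (by simp; decide)]
    exact hres

end CompositeAux

open CompositeAux in
/-- Proposition 2 (composite squares): if `P` is a normal magic square of subtraction
of order 4 with residuum `r`, then the block matrix `Q` with
`Q_{4(u-1)+a, 4(v-1)+b} = P_{a,b} + 16(k(u-1)+v-1)` is a normal magic square of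
subtraction of order `4k` with residuum `k·r`. -/
theorem composite_square (k : ℕ) (hk : 1 ≤ k) (P Q : ℕ → ℕ → ℤ) (r : ℤ)
    (hP : IsMagicSubSquare 4 P r)
    (hQ : ∀ u ∈ Finset.Icc 1 k, ∀ v ∈ Finset.Icc 1 k,
      ∀ a ∈ Finset.Icc 1 4, ∀ b ∈ Finset.Icc 1 4,
        Q (4 * (u - 1) + a) (4 * (v - 1) + b)
          = P a b + 16 * ((k : ℤ) * ((u : ℤ) - 1) + (v : ℤ) - 1)) :
    IsMagicSubSquare (4 * k) Q ((k : ℤ) * r) := by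
  obtain ⟨hPent, hProw, hPcol, hPdiag, hPadiag⟩ := hP
  -- P entries are in [1,16]
  have hPmem : ∀ a b : ℕ, 1 ≤ a → a ≤ 4 → 1 ≤ b → b ≤ 4 → 1 ≤ P a b ∧ P a b ≤ 16 := by
    intro a b ha1 ha4 hb1 hb4
    have hab : ((a,b) : ℕ × ℕ) ∈ (Finset.Icc 1 4 ×ˢ Finset.Icc 1 4).val := by
      rw [Finset.mem_val, Finset.mem_product, Finset.mem_Icc, Finset.mem_Icc]
      omega
    have hmem := Multiset.mem_map_of_mem (fun p : ℕ × ℕ => P p.1 p.2) hab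
    rw [hPent, Finset.mem_val, Finset.mem_Icc] at hmem
    constructor
    · exact hmem.1
    · have := hmem.2
      push_cast at this
      linarith
  -- injectivity of P on the index square
  have hPinj : ∀ p ∈ Finset.Icc 1 4 ×ˢ Finset.Icc 1 4, ∀ q ∈ Finset.Icc 1 4 ×ˢ Finset.Icc 1 4,
      P p.1 p.2 = P q.1 q.2 → p = q := by
    have hnd : ((Finset.Icc 1 4 ×ˢ Finset.Icc 1 4).val.map
        fun p : ℕ × ℕ => P p.1 p.2).Nodup := by
      rw [hPent]; exact (Finset.Icc (1:ℤ) ((4:ℤ)^2)).nodup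
    exact fun p hp q hq => Multiset.inj_on_of_nodup_map hnd p hp q hq
  -- decomposition of indices
  have hdec : ∀ i : ℕ, 1 ≤ i → i ≤ 4*k →
      ∃ u a : ℕ, 1 ≤ u ∧ u ≤ k ∧ 1 ≤ a ∧ a ≤ 4 ∧ i = 4*(u-1)+a := by
    intro i h1 h2
    exact ⟨(i+3)/4, i - 4*((i+3)/4 - 1), by omega⟩
  -- convenient form of hQ
  have hQ' : ∀ u v a b : ℕ, 1 ≤ u → u ≤ k → 1 ≤ v → v ≤ k → 1 ≤ a → a ≤ 4 → 1 ≤ b → b ≤ 4 →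
      Q (4*(u-1)+a) (4*(v-1)+b) = P a b + 16 * ((k:ℤ)*((u:ℤ)-1) + (v:ℤ) - 1) := by
    intro u v a b h1 h2 h3 h4 h5 h6 h7 h8
    exact hQ u (Finset.mem_Icc.mpr ⟨h1, h2⟩) v (Finset.mem_Icc.mpr ⟨h3, h4⟩)
      a (Finset.mem_Icc.mpr ⟨h5, h6⟩) b (Finset.mem_Icc.mpr ⟨h7, h8⟩)
  -- injectivity of the (u,v,a,b) ↦ offset map, stated at the level of values
  have hQval : ∀ p ∈ (Finset.Icc 1 (4*k) ×ˢ Finset.Icc 1 (4*k)),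
      1 ≤ Q p.1 p.2 ∧ Q p.1 p.2 ≤ 16*(k:ℤ)^2 := by
    intro p hp
    rw [Finset.mem_product, Finset.mem_Icc, Finset.mem_Icc] at hp
    obtain ⟨u, a, hu1, huk, ha1, ha4, hp1⟩ := hdec p.1 hp.1.1 hp.1.2
    obtain ⟨v, b, hv1, hvk, hb1, hb4, hp2⟩ := hdec p.2 hp.2.1 hp.2.2
    rw [hp1, hp2, hQ' u v a b hu1 huk hv1 hvk ha1 ha4 hb1 hb4]
    have hpab := hPmem a b ha1 ha4 hb1 hb4
    have hk0 : (0:ℤ) ≤ (k:ℤ) := by positivity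
    have hmul1 : (0:ℤ) ≤ (k:ℤ)*((u:ℤ)-1) := by
      apply mul_nonneg hk0
      have : (1:ℤ) ≤ (u:ℤ) := by exact_mod_cast hu1
      linarith
    have hmul2 : (k:ℤ)*((u:ℤ)-1) ≤ (k:ℤ)*((k:ℤ)-1) := by
      apply mul_le_mul_of_nonneg_left _ hk0
      have : (u:ℤ) ≤ (k:ℤ) := by exact_mod_cast huk
      linarith
    have hexp : (k:ℤ)*((k:ℤ)-1) = (k:ℤ)^2 - (k:ℤ) := by ring
    have hv' : (v:ℤ) ≤ (k:ℤ) := by exact_mod_cast hvk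
    have hv'' : (1:ℤ) ≤ (v:ℤ) := by exact_mod_cast hv1
    constructor <;> [linarith [hpab.1]; linarith [hpab.2]]
  have hQinj : ∀ p ∈ (Finset.Icc 1 (4*k) ×ˢ Finset.Icc 1 (4*k)),
      ∀ q ∈ (Finset.Icc 1 (4*k) ×ˢ Finset.Icc 1 (4*k)),
      Q p.1 p.2 = Q q.1 q.2 → p = q := by
    intro p hp q hq hpq
    rw [Finset.mem_product, Finset.mem_Icc, Finset.mem_Icc] at hp hq
    obtain ⟨u₁, a₁, hu₁, hu₁k, ha₁, ha₁4, hp1⟩ := hdec p.1 hp.1.1 hp.1.2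
    obtain ⟨v₁, b₁, hv₁, hv₁k, hb₁, hb₁4, hp2⟩ := hdec p.2 hp.2.1 hp.2.2
    obtain ⟨u₂, a₂, hu₂, hu₂k, ha₂, ha₂4, hq1⟩ := hdec q.1 hq.1.1 hq.1.2
    obtain ⟨v₂, b₂, hv₂, hv₂k, hb₂, hb₂4, hq2⟩ := hdec q.2 hq.2.1 hq.2.2
    rw [hp1, hp2, hq1, hq2, hQ' u₁ v₁ a₁ b₁ hu₁ hu₁k hv₁ hv₁k ha₁ ha₁4 hb₁ hb₁4,
      hQ' u₂ v₂ a₂ b₂ hu₂ hu₂k hv₂ hv₂k ha₂ ha₂4 hb₂ hb₂4] at hpq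
    have hpv₁ := hPmem a₁ b₁ ha₁ ha₁4 hb₁ hb₁4
    have hpv₂ := hPmem a₂ b₂ ha₂ ha₂4 hb₂ hb₂4
    set T₁ : ℤ := (k:ℤ)*((u₁:ℤ)-1) + (v₁:ℤ) - 1 with hT₁
    set T₂ : ℤ := (k:ℤ)*((u₂:ℤ)-1) + (v₂:ℤ) - 1 with hT₂
    have hd1 : P a₁ b₁ - P a₂ b₂ = 16*(T₂ - T₁) := by linarith [hpq]
    set d : ℤ := T₂ - T₁ with hdd
    have hd0 : d = 0 := by
      have h1 := hpv₁.1; have h2 := hpv₁.2; have h3 := hpv₂.1; have h4 := hpv₂.2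
      omega
    have hPeq : P a₁ b₁ = P a₂ b₂ := by omega
    have hTeq : T₁ = T₂ := by omega
    have habeq : ((a₁, b₁) : ℕ × ℕ) = (a₂, b₂) := by
      apply hPinj
      · rw [Finset.mem_product, Finset.mem_Icc, Finset.mem_Icc]; omega
      · rw [Finset.mem_product, Finset.mem_Icc, Finset.mem_Icc]; omega
      · exact hPeq
    rw [Prod.mk.injEq] at habeq
    -- now deduce u₁ = u₂ and v₁ = v₂ from T₁ = T₂
    rw [hT₁, hT₂] at hTeq
    have hk0 : (0:ℤ) ≤ (k:ℤ) := by positivity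
    have hv₁' : (1:ℤ) ≤ (v₁:ℤ) := by exact_mod_cast hv₁
    have hv₁k' : (v₁:ℤ) ≤ (k:ℤ) := by exact_mod_cast hv₁k
    have hv₂' : (1:ℤ) ≤ (v₂:ℤ) := by exact_mod_cast hv₂
    have hv₂k' : (v₂:ℤ) ≤ (k:ℤ) := by exact_mod_cast hv₂k
    have huu : u₁ = u₂ := by
      by_contra hne
      rcases Nat.lt_or_ge u₁ u₂ with hlt | hge
      · have h1 : ((u₁:ℤ)-1) + 1 ≤ (u₂:ℤ)-1 := by
          have : (u₁:ℤ) + 1 ≤ (u₂:ℤ) := by exact_mod_cast hlt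
          linarith
        have h2 : (k:ℤ)*(((u₁:ℤ)-1)+1) ≤ (k:ℤ)*((u₂:ℤ)-1) :=
          mul_le_mul_of_nonneg_left h1 hk0
        have h3 : (k:ℤ)*(((u₁:ℤ)-1)+1) = (k:ℤ)*((u₁:ℤ)-1) + (k:ℤ) := by ring
        linarith
      · have hlt : u₂ < u₁ := by omega
        have h1 : ((u₂:ℤ)-1) + 1 ≤ (u₁:ℤ)-1 := by
          have : (u₂:ℤ) + 1 ≤ (u₁:ℤ) := by exact_mod_cast hlt
          linarith
        have h2 : (k:ℤ)*(((u₂:ℤ)-1)+1) ≤ (k:ℤ)*((u₁:ℤ)-1) :=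
          mul_le_mul_of_nonneg_left h1 hk0
        have h3 : (k:ℤ)*(((u₂:ℤ)-1)+1) = (k:ℤ)*((u₂:ℤ)-1) + (k:ℤ) := by ring
        linarith
    have hvv : v₁ = v₂ := by
      subst huu
      have : (v₁:ℤ) = (v₂:ℤ) := by linarith
      exact_mod_cast this
    have hfst : p.1 = q.1 := by omega
    have hsnd : p.2 = q.2 := by omega
    exact Prod.ext hfst hsnd
  refine ⟨?_, ?_, ?_, ?_, ?_⟩
  · -- entries
    have hnd : (((Finset.Icc 1 (4*k) ×ˢ Finset.Icc 1 (4*k)).val).map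
        fun p : ℕ × ℕ => Q p.1 p.2).Nodup :=
      Multiset.Nodup.map_on
        (fun x hx y hy => hQinj x (Finset.mem_val.mp hx) y (Finset.mem_val.mp hy))
        (Finset.Icc 1 (4*k) ×ˢ Finset.Icc 1 (4*k)).nodup
    set F : Finset ℤ := ⟨_, hnd⟩ with hF
    have hsub : F ⊆ Finset.Icc (1:ℤ) (((4*k : ℕ):ℤ)^2) := by
      intro x hx
      have hx' : x ∈ ((Finset.Icc 1 (4*k) ×ˢ Finset.Icc 1 (4*k)).val).map
          (fun p : ℕ × ℕ => Q p.1 p.2) := hx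
      rw [Multiset.mem_map] at hx'
      obtain ⟨p, hp, rfl⟩ := hx'
      have hval := hQval p (Finset.mem_val.mp hp)
      rw [Finset.mem_Icc]
      refine ⟨hval.1, ?_⟩
      have : (((4*k : ℕ):ℤ))^2 = 16*(k:ℤ)^2 := by push_cast; ring
      rw [this]
      exact hval.2
    have hcardF : F.card = (4*k)*(4*k) := by
      have h1 : F.card = Multiset.card (((Finset.Icc 1 (4*k) ×ˢ
          Finset.Icc 1 (4*k)).val).map fun p : ℕ × ℕ => Q p.1 p.2) := rfl
      rw [h1, Multiset.card_map]
      show (Finset.Icc 1 (4*k) ×ˢ Finset.Icc 1 (4*k)).card = (4*k)*(4*k)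
      rw [Finset.card_product, Nat.card_Icc]
      congr 1
    have hcard : (Finset.Icc (1:ℤ) (((4*k : ℕ):ℤ)^2)).card ≤ F.card := by
      rw [Int.card_Icc, hcardF]
      have : (((4*k : ℕ):ℤ))^2 + 1 - 1 = ((4*k)*(4*k) : ℕ) := by push_cast; ring
      rw [this, Int.toNat_natCast]
    have hfin : F = Finset.Icc (1:ℤ) (((4*k : ℕ):ℤ)^2) :=
      Finset.eq_of_subset_of_card_le hsub hcard
    exact congrArg Finset.val hfin
  · -- rows
    intro i hi
    rw [Finset.mem_Icc] at hi
    obtain ⟨u, a, hu1, huk, ha1, ha4, rfl⟩ := hdec i hi.1 hi.2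
    show res ((List.range (4*k)).map fun j => Q (4*(u-1)+a) (j+1)) = (k:ℤ)*r
    apply res_line k _ (fun t => P a (t+1)) (fun v => 16*((k:ℤ)*((u:ℤ)-1) + (v:ℤ)))
    · intro t ht; exact hPmem a (t+1) ha1 ha4 (by omega) (by omega)
    · exact hProw a (Finset.mem_Icc.mpr ⟨ha1, ha4⟩)
    · intro v w hvw hw
      have : (v:ℤ) + 1 ≤ (w:ℤ) := by exact_mod_cast hvw
      linarith
    · intro v hv t ht
      have h := hQ' u (v+1) a (t+1) hu1 huk (by omega) (by omega) ha1 ha4 (by omega) (by omega)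
      have h2 : 4*v + t + 1 = 4*((v+1)-1) + (t+1) := by omega
      rw [h2, h]
      push_cast
      ring
  · -- columns
    intro j hj
    rw [Finset.mem_Icc] at hj
    obtain ⟨v, b, hv1, hvk, hb1, hb4, rfl⟩ := hdec j hj.1 hj.2
    show res ((List.range (4*k)).map fun i => Q (i+1) (4*(v-1)+b)) = (k:ℤ)*r
    apply res_line k _ (fun t => P (t+1) b) (fun u => 16*((k:ℤ)*(u:ℤ) + (v:ℤ) - 1))
    · intro t ht; exact hPmem (t+1) b (by omega) (by omega) hb1 hb4
    · exact hPcol b (Finset.mem_Icc.mpr ⟨hb1, hb4⟩)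
    · intro u w huw hw
      have h1 : (u:ℤ) + 1 ≤ (w:ℤ) := by exact_mod_cast huw
      have h2 : (1:ℤ) ≤ (k:ℤ) := by exact_mod_cast hk
      nlinarith
    · intro u hu t ht
      have h := hQ' (u+1) v (t+1) b (by omega) (by omega) hv1 hvk (by omega) (by omega) hb1 hb4
      have h2 : 4*u + t + 1 = 4*((u+1)-1) + (t+1) := by omega
      rw [h2, h]
      push_cast
      ring
  · -- diagonal
    show res ((List.range (4*k)).map fun i => Q (i+1) (i+1)) = (k:ℤ)*r
    apply res_line k _ (fun t => P (t+1) (t+1)) (fun u => 16*((k:ℤ)*(u:ℤ) + (u:ℤ)))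
    · intro t ht; exact hPmem (t+1) (t+1) (by omega) (by omega) (by omega) (by omega)
    · exact hPdiag
    · intro u w huw hw
      have h1 : (u:ℤ) + 1 ≤ (w:ℤ) := by exact_mod_cast huw
      have h2 : (1:ℤ) ≤ (k:ℤ) := by exact_mod_cast hk
      nlinarith
    · intro u hu t ht
      have h := hQ' (u+1) (u+1) (t+1) (t+1) (by omega) (by omega) (by omega) (by omega)
        (by omega) (by omega) (by omega) (by omega)
      have h2 : 4*u + t + 1 = 4*((u+1)-1) + (t+1) := by omega
      rw [h2, h]
      push_cast
      ring
  · -- antidiagonal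
    show res ((List.range (4*k)).map fun i => Q (i+1) (4*k - i)) = (k:ℤ)*r
    apply res_line k _ (fun t => P (t+1) (4 - t)) (fun u => 16*((k:ℤ)*(u:ℤ) + (k:ℤ) - (u:ℤ) - 1))
    · intro t ht; exact hPmem (t+1) (4-t) (by omega) (by omega) (by omega) (by omega)
    · exact hPadiag
    · intro u w huw hw
      have h1 : (u:ℤ) + 1 ≤ (w:ℤ) := by exact_mod_cast huw
      have h2 : (w:ℤ) + 1 ≤ (k:ℤ) := by exact_mod_cast hw
      nlinarith
    · intro u hu t ht
      have h := hQ' (u+1) (k-u) (t+1) (4-t) (by omega) (by omega) (by omega) (by omega)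
        (by omega) (by omega) (by omega) (by omega)
      have h2 : 4*u + t + 1 = 4*((u+1)-1) + (t+1) := by omega
      have h3 : 4*k - (4*u + t) = 4*((k-u)-1) + (4-t) := by omega
      rw [h2, h3, h]
      have hcku : ((k - u : ℕ) : ℤ) = (k:ℤ) - (u:ℤ) := by
        have : u ≤ k := by omega
        exact_mod_cast Int.ofNat_sub this
      rw [hcku]
      push_cast
      ring
end

section
/- Let x and y be finite sequences of integers such that x has even length and every entry of x is strictly greater than every entry of y. Then the residuum of the concatenation x ++ y equals res(x) + res(y). -/
lemma altSum_append (l m : List ℤ) (hl : Even l.length) :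
    (l ++ m).alternatingSum = l.alternatingSum + m.alternatingSum := by
  induction l using List.alternatingSum.induct (G := ℤ) with
  | case1 => simp
  | case2 g => simp at hl
  | case3 g h t ih =>
    simp only [List.length_cons, Nat.even_add_one, not_not] at hl
    simp only [List.cons_append, List.alternatingSum, ih (by simpa using hl), List.append_eq]
    ring
/-- If `x` has even length and every entry of `x` is strictly greater than every
entry of `y`, then `res (x ++ y) = res x + res y`. -/
theorem res_append (x y : List ℤ) (hx : Even x.length)
    (h : ∀ a ∈ x, ∀ b ∈ y, b < a) :
    res (x ++ y) = res x + res y := by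
  have key : (x ++ y).insertionSort (· ≥ ·) =
      x.insertionSort (· ≥ ·) ++ y.insertionSort (· ≥ ·) := by
    refine (fun hp h1 h2 => List.Perm.eq_of_pairwise' (r := (· ≥ ·)) h1 h2 hp) ?_ ?_ ?_
    · exact (List.perm_insertionSort _ (x ++ y)).trans
        (((List.perm_insertionSort _ x).append (List.perm_insertionSort _ y)).symm)
    · exact List.pairwise_insertionSort _ _
    · rw [List.pairwise_append]
      refine ⟨List.pairwise_insertionSort _ _, List.pairwise_insertionSort _ _, ?_⟩
      intro a ha b hb
      have ha' := (List.perm_insertionSort (· ≥ ·) x).mem_iff.mp ha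
      have hb' := (List.perm_insertionSort (· ≥ ·) y).mem_iff.mp hb
      exact le_of_lt (h a ha' b hb')
  have hlen : Even ((x.insertionSort (· ≥ ·)).length) := by
    rwa [List.length_insertionSort]
  rw [res, key, altSum_append _ _ hlen, res, res]
end

section
/- Let n ≥ 3 be an odd integer, m = (n+1)/2, [k]_n = ((k−1) mod n) + 1, f(i,j) = (m−i)·(−1)^j + n(n−j) + m, and let σ and τ be permutations of {1,…,n} with σ(m) = m and τ(m) = m. Define g(i,j) = f(σ(i), τ(j)), and define the n×n matrix M by M_{i,j} = g((i+j)/2, (j−i)/2 + m) if i and j have the same parity, and M_{i,j} = g([(i+j+n)/2]_n, [(j−i+n)/2 + m]_n) otherwise. Then M is a normal magic square of subtraction of order n with residuum (n²+1)/2. -/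
section helpers

instance : IsTotal ℤ (· ≥ ·) := ⟨fun a b => le_total b a⟩
instance : IsTrans ℤ (· ≥ ·) := ⟨fun _ _ _ h1 h2 => le_trans h2 h1⟩
instance : IsAntisymm ℤ (· ≥ ·) := ⟨fun _ _ h1 h2 => le_antisymm h2 h1⟩

lemma res_congr {l₁ l₂ : List ℤ} (h : l₁.Perm l₂) : res l₁ = res l₂ := by
  unfold res
  congr 1
  exact List.Perm.eq_of_pairwise (fun a b _ _ h1 h2 => le_antisymm h2 h1)
    (List.pairwise_insertionSort _ _) (List.pairwise_insertionSort _ _)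
    ((List.perm_insertionSort _ _).trans (h.trans (List.perm_insertionSort _ _).symm))

lemma res_of_sorted {l : List ℤ} (h : List.Pairwise (· ≥ ·) l) : res l = l.alternatingSum := by
  rw [res, List.Pairwise.insertionSort_eq h]

lemma altSum_range : ∀ (n : ℕ) (f : ℕ → ℤ),
    ((List.range n).map f).alternatingSum = ∑ k ∈ Finset.range n, (-1 : ℤ) ^ k * f k
  | 0, f => by simp
  | (n+1), f => by
    rw [List.range_succ_eq_map, List.map_cons, List.alternatingSum_cons, List.map_map,
      Finset.sum_range_succ']
    have h1 : (List.map (f ∘ Nat.succ) (List.range n)).alternatingSum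
        = ∑ k ∈ Finset.range n, (-1 : ℤ) ^ k * f (k + 1) := by
      simpa [Function.comp_def] using altSum_range n (fun k => f (k + 1))
    have h2 : ∑ k ∈ Finset.range n, (-1 : ℤ) ^ (k + 1) * f (k + 1)
        = -∑ k ∈ Finset.range n, (-1 : ℤ) ^ k * f (k + 1) := by
      rw [← Finset.sum_neg_distrib]
      exact Finset.sum_congr rfl fun k _ => by ring
    rw [h1, h2]
    simp only [pow_zero, one_mul]
    ring

lemma sum_pm (t : ℕ) : (∑ k ∈ Finset.range (2 * t + 1), (-1 : ℤ) ^ k = 1)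
    ∧ (∑ k ∈ Finset.range (2 * t + 1), (-1 : ℤ) ^ k * k = t) := by
  induction t with
  | zero => simp
  | succ t ih =>
    have e1 : 2 * (t + 1) + 1 = (2 * t + 1) + 1 + 1 := by ring
    have ho : (-1 : ℤ) ^ (2 * t + 1) = -1 := Odd.neg_one_pow ⟨t, by ring⟩
    have he : (-1 : ℤ) ^ (2 * t + 1 + 1) = 1 := Even.neg_one_pow ⟨t + 1, by ring⟩
    constructor
    · rw [e1, Finset.sum_range_succ, Finset.sum_range_succ, ih.1, ho, he]; ring
    · rw [e1, Finset.sum_range_succ, Finset.sum_range_succ, ih.2, ho, he]; push_cast; ring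

lemma map_val_eq_of {α β : Type} {s : Finset α} {t : Finset β} {f : α → β}
    (hinj : Set.InjOn f s) (hmaps : ∀ a ∈ s, f a ∈ t) (hcard : t.card ≤ s.card) :
    s.val.map f = t.val := by
  have hnd : (s.val.map f).Nodup :=
    Multiset.Nodup.map_on (fun x hx y hy h => hinj (by simpa using hx) (by simpa using hy) h)
      s.nodup
  have : (⟨s.val.map f, hnd⟩ : Finset β) = t := by
    apply Finset.eq_of_subset_of_card_le
    · intro x hx
      simp only [Finset.mem_mk, Multiset.mem_map] at hx
      obtain ⟨a, ha, rfl⟩ := hx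
      exact hmaps a ha
    · have hcc : (⟨s.val.map f, hnd⟩ : Finset β).card = s.card := by
        simp [Finset.card_mk]
      omega
  calc s.val.map f = (⟨s.val.map f, hnd⟩ : Finset β).val := rfl
    _ = t.val := by rw [this]

end helpers
section wrapkoch

lemma wrap_spec {n : ℤ} (hn : 0 < n) (x : ℤ) :
    ∃ k, wrap n x = x + n * k ∧ 1 ≤ wrap n x ∧ wrap n x ≤ n := by
  refine ⟨-((x - 1) / n), ?_, ?_, ?_⟩
  · unfold wrap; rw [Int.emod_def]; ring
  · unfold wrap; have := Int.emod_nonneg (x - 1) (ne_of_gt hn); omega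
  · unfold wrap; have := Int.emod_lt_of_pos (x - 1) hn; omega

lemma wrap_eq {n y : ℤ} (hn : 0 < n) (h1 : 1 ≤ y) (h2 : y ≤ n) (k : ℤ) {x : ℤ}
    (h : x = y + n * k) : wrap n x = y := by
  unfold wrap
  subst h
  have : (y + n * k - 1) % n = y - 1 := by
    rw [show y + n * k - 1 = y - 1 + n * k by ring, Int.add_mul_emod_self_left]
    exact Int.emod_eq_of_lt (by omega) (by omega)
  omega

lemma mul_small_eq_zero {n k : ℤ} (hn : 0 < n) (h1 : -n < n * k) (h2 : n * k < n) :
    n * k = 0 := by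
  rcases lt_trichotomy k 0 with h | h | h
  · have : n * k ≤ n * (-1) := by
      apply mul_le_mul_of_nonneg_left (by omega) (by omega)
    omega
  · simp [h]
  · have : n * 1 ≤ n * k := by
      apply mul_le_mul_of_nonneg_left (by omega) (by omega)
    omega

variable {n m : ℤ}

lemma koch_bounds (hn : 3 ≤ n) (h2m : 2 * m = n + 1) {x : ℤ} (hx1 : 1 ≤ x) (hx2 : x ≤ n)
    (y : ℤ) : n * (n - y) + 1 ≤ koch n m x y ∧ koch n m x y ≤ n * (n - y) + n := by
  unfold koch
  split <;> constructor <;> nlinarith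

lemma koch_strict (hn : 3 ≤ n) (h2m : 2 * m = n + 1) {x x' y y' : ℤ}
    (hx1 : 1 ≤ x) (hx2 : x ≤ n) (hx1' : 1 ≤ x') (hx2' : x' ≤ n) (hyy : y < y') :
    koch n m x' y' < koch n m x y := by
  have b1 := koch_bounds hn h2m hx1 hx2 y
  have b2 := koch_bounds hn h2m hx1' hx2' y'
  have : n * (n - y') + n ≤ n * (n - y) := by nlinarith
  omega

lemma koch_inj (hn : 3 ≤ n) (h2m : 2 * m = n + 1) {x x' y y' : ℤ}
    (hx1 : 1 ≤ x) (hx2 : x ≤ n) (hx1' : 1 ≤ x') (hx2' : x' ≤ n)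
    (h : koch n m x y = koch n m x' y') : x = x' ∧ y = y' := by
  have hy : y = y' := by
    by_contra hne
    rcases lt_or_gt_of_ne hne with hlt | hlt
    · have := koch_strict hn h2m hx1 hx2 hx1' hx2' hlt; omega
    · have := koch_strict hn h2m hx1' hx2' hx1 hx2 hlt; omega
  subst hy
  refine ⟨?_, rfl⟩
  unfold koch at h
  split at h <;> omega

lemma koch_mem_sq (hn : 3 ≤ n) (h2m : 2 * m = n + 1) {x y : ℤ}
    (hx1 : 1 ≤ x) (hx2 : x ≤ n) (hy1 : 1 ≤ y) (hy2 : y ≤ n) :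
    1 ≤ koch n m x y ∧ koch n m x y ≤ n ^ 2 := by
  have b := koch_bounds hn h2m hx1 hx2 y
  constructor <;> nlinarith

end wrapkoch
section mainres

lemma range_map_Icc (n : ℕ) :
    (Finset.range n).val.map (fun k : ℕ => (k : ℤ) + 1) = (Finset.Icc (1 : ℤ) n).val := by
  apply map_val_eq_of
  · intro a _ b _ h; simp only at h; omega
  · intro a ha; simp only [Finset.mem_coe, Finset.mem_range] at ha
    simp only [Finset.mem_Icc]; omega
  · simp only [Int.card_Icc, Finset.card_range]; omega

lemma sum_Icc_eq_range (n : ℕ) (f : ℤ → ℤ) :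
    ∑ x ∈ Finset.Icc (1 : ℤ) n, f x = ∑ k ∈ Finset.range n, f ((k : ℤ) + 1) := by
  refine (Finset.sum_nbij' (fun x : ℤ => (x - 1).toNat) (fun k : ℕ => (k : ℤ) + 1)
    ?_ ?_ ?_ ?_ ?_) <;> intro a ha <;>
    simp only [Finset.mem_Icc, Finset.mem_range] at ha ⊢
  · omega
  · omega
  · omega
  · omega
  · congr 1; omega

lemma main_res (n : ℕ) (hn : 3 ≤ n) (m : ℤ) (h2m : 2 * m = (n : ℤ) + 1) (b : ℤ → ℤ)
    (hb : ∀ x ∈ Finset.Icc (1 : ℤ) n, b x ∈ Finset.Icc (1 : ℤ) n)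
    (hsum : ∑ x ∈ Finset.Icc (1 : ℤ) n, b x = (n : ℤ) * m) :
    res ((List.range n).map fun k : ℕ => koch n m (b ((k : ℤ) + 1)) ((k : ℤ) + 1))
      = ((n : ℤ) ^ 2 + 1) / 2 := by
  have hn' : 3 ≤ (n : ℤ) := by exact_mod_cast hn
  have hbmem : ∀ k : ℕ, k < n → 1 ≤ b ((k : ℤ) + 1) ∧ b ((k : ℤ) + 1) ≤ n := by
    intro k hk
    have := hb ((k : ℤ) + 1) (by simp only [Finset.mem_Icc]; omega)
    simpa [Finset.mem_Icc] using this
  have hsort : List.Pairwise (· ≥ ·)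
      ((List.range n).map fun k : ℕ => koch n m (b ((k : ℤ) + 1)) ((k : ℤ) + 1)) := by
    rw [List.pairwise_iff_getElem]
    intro u v hu hv huv
    simp only [List.length_map, List.length_range] at hu hv
    simp only [List.getElem_map, List.getElem_range]
    have h1 := hbmem u (by omega)
    have h2 := hbmem v (by omega)
    have : koch n m (b ((v : ℤ) + 1)) ((v : ℤ) + 1)
        < koch n m (b ((u : ℤ) + 1)) ((u : ℤ) + 1) :=
      koch_strict hn' h2m h1.1 h1.2 h2.1 h2.2 (by exact_mod_cast Nat.add_lt_add_right huv 1)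
    omega
  rw [res_of_sorted hsort, altSum_range]
  have hcongr : ∀ k ∈ Finset.range n,
      (-1 : ℤ) ^ k * koch n m (b ((k : ℤ) + 1)) ((k : ℤ) + 1)
      = (b ((k : ℤ) + 1) - m)
        + (((n : ℤ) * n - n + m) * (-1 : ℤ) ^ k - (n : ℤ) * ((-1 : ℤ) ^ k * k)) := by
    intro k _
    unfold koch
    rcases Nat.even_or_odd k with he | ho
    · have h1 : ¬ Even ((k : ℤ) + 1) := by
        rw [Int.even_add_one, not_not]
        exact_mod_cast he
      rw [if_neg h1, Even.neg_one_pow he]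
      push_cast; ring
    · have h1 : Even ((k : ℤ) + 1) := by
        rw [Int.even_add_one]
        simpa using (Int.odd_coe_nat k).mpr ho
      rw [if_pos h1, Odd.neg_one_pow ho]
      push_cast; ring
  rw [Finset.sum_congr rfl hcongr, Finset.sum_add_distrib, Finset.sum_sub_distrib,
    Finset.sum_sub_distrib, Finset.sum_const, Finset.card_range, ← Finset.mul_sum,
    ← Finset.mul_sum, ← sum_Icc_eq_range, hsum]
  obtain ⟨t, ht1, ht2⟩ : ∃ t : ℕ, n = 2 * t + 1 ∧ (t : ℤ) = m - 1 := by
    refine ⟨(n - 1) / 2, by omega, by omega⟩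
  have hs1 : ∑ k ∈ Finset.range n, (-1 : ℤ) ^ k = 1 := by rw [ht1]; exact (sum_pm t).1
  have hs2 : ∑ k ∈ Finset.range n, (-1 : ℤ) ^ k * k = t := by rw [ht1]; exact (sum_pm t).2
  rw [hs1, hs2, nsmul_eq_mul]
  symm
  apply Int.ediv_eq_of_eq_mul_left (by norm_num)
  linear_combination ((n : ℤ) - 1) * h2m + 2 * (n : ℤ) * ht2
section linediag

lemma map_val_bij (n : ℕ) {c : ℤ → ℤ}
    (hc : Set.BijOn c (Set.Icc 1 (n : ℤ)) (Set.Icc 1 (n : ℤ))) :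
    (Finset.Icc (1 : ℤ) n).val.map c = (Finset.Icc (1 : ℤ) n).val := by
  apply map_val_eq_of
  · rw [Finset.coe_Icc]; exact hc.injOn
  · intro a ha
    have ha' : a ∈ Set.Icc 1 (n : ℤ) := by
      simpa [Set.mem_Icc, Finset.mem_Icc] using ha
    have := hc.mapsTo ha'
    simpa [Finset.mem_Icc, Set.mem_Icc] using this
  · exact le_rfl

lemma coe_list_map_range (n : ℕ) (F : ℤ → ℤ) :
    (((List.range n).map fun k : ℕ => F ((k : ℤ) + 1)) : Multiset ℤ)
      = (Finset.Icc (1 : ℤ) n).val.map F := by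
  rw [← range_map_Icc n, Multiset.map_map]
  rfl

lemma line_res (n : ℕ) (hn : 3 ≤ n) (m : ℤ) (h2m : 2 * m = (n : ℤ) + 1) (b c : ℤ → ℤ)
    (hb : ∀ x ∈ Finset.Icc (1 : ℤ) n, b x ∈ Finset.Icc (1 : ℤ) n)
    (hsum : ∑ x ∈ Finset.Icc (1 : ℤ) n, b x = (n : ℤ) * m)
    (hc : Set.BijOn c (Set.Icc 1 (n : ℤ)) (Set.Icc 1 (n : ℤ))) :
    res ((List.range n).map fun k : ℕ => koch n m (b ((k : ℤ) + 1)) (c ((k : ℤ) + 1)))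
      = ((n : ℤ) ^ 2 + 1) / 2 := by
  classical
  set s : Set ℤ := Set.Icc 1 (n : ℤ) with hs
  set c' : ℤ → ℤ := Function.invFunOn c s with hc'def
  have hinv : Set.InvOn c' c s s := hc.invOn_invFunOn
  have hc'bij : Set.BijOn c' s s :=
    Set.InvOn.bijOn hinv.symm hc.surjOn.mapsTo_invFunOn hc.mapsTo
  have hmem : ∀ x : ℤ, x ∈ Finset.Icc (1 : ℤ) n → x ∈ s := by
    intro x hx; rw [hs]; simpa [Set.mem_Icc, Finset.mem_Icc] using hx
  have hmem' : ∀ x : ℤ, x ∈ s → x ∈ Finset.Icc (1 : ℤ) n := by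
    intro x hx; rw [hs] at hx; simpa [Finset.mem_Icc, Set.mem_Icc] using hx
  have key : (Finset.Icc (1 : ℤ) n).val.map (fun x => koch n m (b x) (c x))
      = (Finset.Icc (1 : ℤ) n).val.map (fun K => koch n m (b (c' K)) K) := by
    conv_rhs => rw [← map_val_bij n hc, Multiset.map_map]
    apply Multiset.map_congr rfl
    intro x hx
    have hxs : x ∈ s := hmem x (by simpa using hx)
    simp only [Function.comp_apply]
    rw [hinv.1 hxs]
  have hms : (((List.range n).map fun k : ℕ =>
        koch n m (b ((k : ℤ) + 1)) (c ((k : ℤ) + 1))) : Multiset ℤ)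
      = (((List.range n).map fun k : ℕ =>
        koch n m (b (c' ((k : ℤ) + 1))) ((k : ℤ) + 1)) : Multiset ℤ) :=
    (coe_list_map_range n (fun x => koch n m (b x) (c x))).trans
      (key.trans (coe_list_map_range n (fun K => koch n m (b (c' K)) K)).symm)
  rw [res_congr (Multiset.coe_eq_coe.mp hms)]
  apply main_res n hn m h2m (fun K => b (c' K))
  · intro x hx
    exact hb (c' x) (hmem' _ (hc'bij.mapsTo (hmem x hx)))
  · rw [← hsum]
    refine Finset.sum_nbij' c' c ?_ ?_ ?_ ?_ ?_
    · intro a ha; exact hmem' _ (hc'bij.mapsTo (hmem a ha))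
    · intro a ha; exact hmem' _ (hc.mapsTo (hmem a ha))
    · intro a ha; exact hinv.2 (hmem a ha)
    · intro a ha; exact hinv.1 (hmem a ha)
    · intro a ha; rfl

lemma diag_res (n : ℕ) (hn : 3 ≤ n) (m : ℤ) (h2m : 2 * m = (n : ℤ) + 1) (b : ℤ → ℤ)
    (hbij : Set.BijOn b (Set.Icc 1 (n : ℤ)) (Set.Icc 1 (n : ℤ))) :
    res ((List.range n).map fun k : ℕ => koch n m (b ((k : ℤ) + 1)) m)
      = ((n : ℤ) ^ 2 + 1) / 2 := by
  have hn' : 3 ≤ (n : ℤ) := by exact_mod_cast hn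
  have hρ : Set.BijOn (fun x : ℤ => (n : ℤ) + 1 - x) (Set.Icc 1 (n : ℤ)) (Set.Icc 1 (n : ℤ)) := by
    have hmt : Set.MapsTo (fun x : ℤ => (n : ℤ) + 1 - x) (Set.Icc 1 (n : ℤ))
        (Set.Icc 1 (n : ℤ)) := by
      intro x hx; simp only [Set.mem_Icc] at hx ⊢; omega
    exact Set.InvOn.bijOn ⟨fun x _ => by simp, fun x _ => by simp⟩ hmt hmt
  -- step 1: multiset equals the canonical descending block list
  have hms : (((List.range n).map fun k : ℕ =>
        koch n m (b ((k : ℤ) + 1)) m) : Multiset ℤ)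
      = (((List.range n).map fun k : ℕ =>
        ((n : ℤ) * ((n : ℤ) - m) + (n : ℤ) + 1) - ((k : ℤ) + 1)) : Multiset ℤ) := by
    rw [coe_list_map_range n (fun x => koch n m (b x) m),
      coe_list_map_range n (fun x => (n : ℤ) * ((n : ℤ) - m) + (n : ℤ) + 1 - x)]
    · -- koch (b x) m over Icc = (C + n + 1 - x) over Icc
      have h1 : (Finset.Icc (1 : ℤ) n).val.map (fun x => koch n m (b x) m)
          = (Finset.Icc (1 : ℤ) n).val.map (fun x => koch n m x m) := by
        conv_rhs => rw [← map_val_bij n hbij, Multiset.map_map]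
        rfl
      rw [h1]
      rcases Int.even_or_odd m with hev | hod
      · apply Multiset.map_congr rfl
        intro x _
        unfold koch
        rw [if_pos hev]
        linear_combination h2m
      · have h2 : (Finset.Icc (1 : ℤ) n).val.map (fun x => koch n m x m)
            = (Finset.Icc (1 : ℤ) n).val.map (fun x => (n : ℤ) * ((n : ℤ) - m) + x) := by
          apply Multiset.map_congr rfl
          intro x _
          unfold koch
          rw [if_neg (by simpa using Int.not_even_iff_odd.mpr hod)]
          ring
        rw [h2]
        conv_rhs => rw [← map_val_bij n hρ, Multiset.map_map]
        apply Multiset.map_congr rfl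
        intro x _
        simp only [Function.comp_apply]
        ring
  rw [res_congr (Multiset.coe_eq_coe.mp hms)]
  have hsort : List.Pairwise (· ≥ ·) ((List.range n).map fun k : ℕ =>
      ((n : ℤ) * ((n : ℤ) - m) + (n : ℤ) + 1) - ((k : ℤ) + 1)) := by
    rw [List.pairwise_iff_getElem]
    intro u v hu hv huv
    simp only [List.length_map, List.length_range] at hu hv
    simp only [List.getElem_map, List.getElem_range]
    omega
  rw [res_of_sorted hsort, altSum_range]
  obtain ⟨t, ht1, ht2⟩ : ∃ t : ℕ, n = 2 * t + 1 ∧ (t : ℤ) = m - 1 := by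
    refine ⟨(n - 1) / 2, by omega, by omega⟩
  have hcongr : ∀ k ∈ Finset.range n,
      (-1 : ℤ) ^ k * (((n : ℤ) * ((n : ℤ) - m) + (n : ℤ) + 1) - ((k : ℤ) + 1))
      = ((n : ℤ) * ((n : ℤ) - m) + (n : ℤ)) * (-1 : ℤ) ^ k - (-1 : ℤ) ^ k * (k : ℤ) := by
    intro k _; ring
  rw [Finset.sum_congr rfl hcongr, Finset.sum_sub_distrib, ← Finset.mul_sum]
  have hs1 : ∑ k ∈ Finset.range n, (-1 : ℤ) ^ k = 1 := by rw [ht1]; exact (sum_pm t).1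
  have hs2 : ∑ k ∈ Finset.range n, (-1 : ℤ) ^ k * k = t := by rw [ht1]; exact (sum_pm t).2
  rw [hs1, hs2]
  symm
  apply Int.ediv_eq_of_eq_mul_left (by norm_num)
  linear_combination ((n : ℤ) + 1) * h2m + 2 * ht2

end linediag
section cmapsec

/-- core branch map: `u ↦ u/2 + g` or wrapped shifted version -/
def cmap (n g u : ℤ) : ℤ := if Even u then u / 2 + g else wrap n ((u + n) / 2 + g)

def gmap (n e g ε x : ℤ) : ℤ := cmap n g (ε * x + e)

def emap (n e g ε b : ℤ) : ℤ := wrap n (ε * (2 * b - 2 * g - e))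

variable {n g : ℤ}

lemma cmap_mem (hn0 : 0 < n) {u : ℤ}
    (hEg : Even u → 1 ≤ u / 2 + g ∧ u / 2 + g ≤ n) :
    1 ≤ cmap n g u ∧ cmap n g u ≤ n := by
  unfold cmap
  split_ifs with hev
  · exact hEg hev
  · obtain ⟨k, hw, h1, h2⟩ := wrap_spec hn0 ((u + n) / 2 + g)
    exact ⟨h1, h2⟩

lemma cmap_two_even {u : ℤ} (hev : Even u) : 2 * cmap n g u = u + 2 * g := by
  unfold cmap
  rw [if_pos hev, Int.even_iff] at *
  omega

lemma cmap_two_odd (hn0 : 0 < n) (hno : n % 2 = 1) {u : ℤ} (hod : ¬ Even u) :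
    ∃ k, 2 * cmap n g u = u + 2 * g + n * (2 * k + 1) := by
  unfold cmap
  rw [if_neg hod]
  obtain ⟨k, hw, h1, h2⟩ := wrap_spec hn0 ((u + n) / 2 + g)
  refine ⟨k, ?_⟩
  rw [Int.not_even_iff] at hod
  obtain ⟨t, ht⟩ : ∃ t, t = n * k := ⟨_, rfl⟩
  have hT : n * (2 * k + 1) = 2 * t + n := by rw [ht]; ring
  rw [hT]
  rw [← ht] at hw
  omega

/-- evaluating `cmap` at an explicitly offset argument -/
lemma cmap_eq (hn0 : 0 < n) (hno : n % 2 = 1) {b u : ℤ} (hb1 : 1 ≤ b) (hb2 : b ≤ n)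
    (K : ℤ) (hu : u = 2 * b - 2 * g + n * K)
    (hEg : Even u → 1 ≤ u / 2 + g ∧ u / 2 + g ≤ n) : cmap n g u = b := by
  unfold cmap
  split_ifs with hev
  · rcases Int.even_or_odd K with ⟨k2, rfl⟩ | ⟨k2, rfl⟩
    · have hbd := hEg hev
      obtain ⟨t, ht⟩ : ∃ t, t = n * k2 := ⟨_, rfl⟩
      have hu' : u = 2 * b - 2 * g + 2 * t := by rw [ht]; linear_combination hu
      have hv : u / 2 + g = b + t := by omega
      have h0 : n * k2 = 0 := by
        apply mul_small_eq_zero hn0 <;> rw [← ht] <;> omega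
      omega
    · exfalso
      rw [Int.even_iff] at hev
      obtain ⟨t, ht⟩ : ∃ t, t = n * k2 := ⟨_, rfl⟩
      have hu' : u = 2 * b - 2 * g + 2 * t + n := by rw [ht]; linear_combination hu
      omega
  · rcases Int.even_or_odd K with ⟨k2, rfl⟩ | ⟨k2, rfl⟩
    · exfalso
      exact hev ⟨b - g + n * k2, by linear_combination hu⟩
    · apply wrap_eq hn0 hb1 hb2 (k2 + 1)
      obtain ⟨t, ht⟩ : ∃ t, t = n * k2 := ⟨_, rfl⟩
      have hu' : u = 2 * b - 2 * g + 2 * t + n := by rw [ht]; linear_combination hu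
      have hT : n * (k2 + 1) = t + n := by rw [ht]; ring
      rw [hT]
      omega

variable {e ε : ℤ}

lemma gmap_bijOn (hn : 3 ≤ n) (hno : n % 2 = 1) (hε : ε = 1 ∨ ε = -1)
    (hEg : ∀ x, 1 ≤ x → x ≤ n → Even (ε * x + e) →
      1 ≤ (ε * x + e) / 2 + g ∧ (ε * x + e) / 2 + g ≤ n) :
    Set.BijOn (gmap n e g ε) (Set.Icc 1 n) (Set.Icc 1 n) := by
  have hn0 : (0 : ℤ) < n := by omega
  have hmt : Set.MapsTo (gmap n e g ε) (Set.Icc 1 n) (Set.Icc 1 n) := by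
    intro x hx
    simp only [Set.mem_Icc] at hx ⊢
    exact cmap_mem hn0 (hEg x hx.1 hx.2)
  have hmt' : Set.MapsTo (emap n e g ε) (Set.Icc 1 n) (Set.Icc 1 n) := by
    intro x _
    simp only [Set.mem_Icc]
    obtain ⟨k, hw, h1, h2⟩ := wrap_spec hn0 (ε * (2 * x - 2 * g - e))
    exact ⟨h1, h2⟩
  have hleft : ∀ x ∈ Set.Icc (1 : ℤ) n, emap n e g ε (gmap n e g ε x) = x := by
    intro x hx
    simp only [Set.mem_Icc] at hx
    unfold gmap emap
    rcases Int.even_or_odd (ε * x + e) with hev | hod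
    · have h2c := cmap_two_even (n := n) (g := g) hev
      apply wrap_eq hn0 hx.1 hx.2 0
      rcases hε with rfl | rfl
      · linear_combination h2c
      · linear_combination -h2c
    · obtain ⟨k, h2c⟩ := cmap_two_odd hn0 hno (g := g) (Int.not_even_iff_odd.mpr hod)
      rcases hε with rfl | rfl
      · exact wrap_eq hn0 hx.1 hx.2 (2 * k + 1) (by linear_combination h2c)
      · exact wrap_eq hn0 hx.1 hx.2 (-(2 * k + 1)) (by linear_combination -h2c)
  have hright : ∀ b ∈ Set.Icc (1 : ℤ) n, gmap n e g ε (emap n e g ε b) = b := by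
    intro b hb
    simp only [Set.mem_Icc] at hb
    unfold emap gmap
    obtain ⟨k, hw, h1, h2⟩ := wrap_spec hn0 (ε * (2 * b - 2 * g - e))
    apply cmap_eq hn0 hno hb.1 hb.2 (ε * k)
    · rcases hε with rfl | rfl
      · linear_combination hw
      · linear_combination -hw
    · intro hev
      exact hEg _ h1 h2 hev
  exact Set.InvOn.bijOn ⟨hleft, hright⟩ hmt hmt'

/-- two-dimensional inverse: recovering `(i,j)` from the pair `(A,B)`. -/
lemma psi_left (hn : 3 ≤ n) (hno : n % 2 = 1) {m i j : ℤ} (h2m : 2 * m = n + 1)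
    (hi1 : 1 ≤ i) (hi2 : i ≤ n) (hj1 : 1 ≤ j) (hj2 : j ≤ n) :
    wrap n (cmap n 0 (i + j) - cmap n m (j - i) + m) = i ∧
    wrap n (cmap n 0 (i + j) + cmap n m (j - i) - m) = j := by
  have hn0 : (0 : ℤ) < n := by omega
  rcases Int.even_or_odd (i + j) with hev | hod
  · have hev' : Even (j - i) := by
      rw [Int.even_sub]; rw [Int.even_add] at hev; tauto
    have h1 := cmap_two_even (n := n) (g := 0) hev
    have h2 := cmap_two_even (n := n) (g := m) hev'
    constructor
    · exact wrap_eq hn0 hi1 hi2 0 (by omega)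
    · exact wrap_eq hn0 hj1 hj2 0 (by omega)
  · have hod' : ¬ Even (j - i) := by
      rw [Int.even_sub]
      rw [← Int.not_even_iff_odd, Int.even_add] at hod
      tauto
    obtain ⟨k1, h1⟩ := cmap_two_odd hn0 hno (g := (0:ℤ)) (Int.not_even_iff_odd.mpr hod)
    obtain ⟨k2, h2⟩ := cmap_two_odd hn0 hno (g := m) hod'
    obtain ⟨t1, ht1⟩ : ∃ t, t = n * k1 := ⟨_, rfl⟩
    obtain ⟨t2, ht2⟩ : ∃ t, t = n * k2 := ⟨_, rfl⟩
    have h1' : 2 * cmap n 0 (i + j) = i + j + 2 * t1 + n := by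
      rw [ht1]; linear_combination h1
    have h2' : 2 * cmap n m (j - i) = j - i + 2 * m + 2 * t2 + n := by
      rw [ht2]; linear_combination h2
    constructor
    · apply wrap_eq hn0 hi1 hi2 (k1 - k2)
      have hT : n * (k1 - k2) = t1 - t2 := by rw [ht1, ht2]; ring
      rw [hT]; omega
    · apply wrap_eq hn0 hj1 hj2 (k1 + k2 + 1)
      have hT : n * (k1 + k2 + 1) = t1 + t2 + n := by rw [ht1, ht2]; ring
      rw [hT]; omega

end cmapsec
section assembly

lemma finset_sum_eq (s : Finset ℤ) (f : ℤ → ℤ) : s.sum f = (s.val.map f).sum := rfl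

lemma sum_bijOn (n : ℕ) (m : ℤ) (h2m : 2 * m = (n : ℤ) + 1) {f : ℤ → ℤ}
    (hf : Set.BijOn f (Set.Icc 1 (n : ℤ)) (Set.Icc 1 (n : ℤ))) :
    ∑ x ∈ Finset.Icc (1 : ℤ) n, f x = (n : ℤ) * m := by
  have h1 : ∑ x ∈ Finset.Icc (1 : ℤ) n, f x = ∑ x ∈ Finset.Icc (1 : ℤ) n, x := by
    rw [finset_sum_eq, finset_sum_eq, map_val_bij n hf, Multiset.map_id']
  rw [h1, sum_Icc_eq_range n (fun x => x)]
  have key : ∀ N : ℕ, 2 * (∑ k ∈ Finset.range N, ((k : ℤ) + 1)) = N * (N + 1) := by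
    intro N
    induction N with
    | zero => simp
    | succ N ih => rw [Finset.sum_range_succ]; push_cast; push_cast at ih; linarith
  have h2 : 2 * (∑ k ∈ Finset.range n, ((k : ℤ) + 1)) = 2 * ((n : ℤ) * m) := by
    rw [key n]; linear_combination (-(n : ℤ)) * h2m
  exact mul_left_cancel₀ two_ne_zero h2
end assembly

/-- Kochański's construction applied to `g(i,j) = f(σ(i), τ(j))`, where `σ, τ` are
permutations of `{1,…,n}` fixing `m = (n+1)/2`, still yields a normal magic square of
subtraction of order `n` with residuum `(n²+1)/2`. -/
theorem kochanski_permuted (n : ℕ) (hn : 3 ≤ n) (hodd : Odd n)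
    (m : ℤ) (hm : m = ((n : ℤ) + 1) / 2) (σ τ : ℤ → ℤ)
    (hσ : Set.BijOn σ (Set.Icc 1 (n : ℤ)) (Set.Icc 1 (n : ℤ))) (hσm : σ m = m)
    (hτ : Set.BijOn τ (Set.Icc 1 (n : ℤ)) (Set.Icc 1 (n : ℤ))) (hτm : τ m = m)
    (M : ℕ → ℕ → ℤ)
    (hM : ∀ i j : ℕ, M i j =
      if Even ((i : ℤ) + (j : ℤ)) then
        koch (n : ℤ) m (σ (((i : ℤ) + (j : ℤ)) / 2)) (τ (((j : ℤ) - (i : ℤ)) / 2 + m))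
      else
        koch (n : ℤ) m (σ (wrap (n : ℤ) (((i : ℤ) + (j : ℤ) + (n : ℤ)) / 2)))
          (τ (wrap (n : ℤ) (((j : ℤ) - (i : ℤ) + (n : ℤ)) / 2 + m)))) :
    IsMagicSubSquare n M (((n : ℤ) ^ 2 + 1) / 2) := by
  have hn' : 3 ≤ (n : ℤ) := by exact_mod_cast hn
  obtain ⟨r, hr⟩ := hodd
  have hrz : (n : ℤ) = 2 * (r : ℤ) + 1 := by exact_mod_cast hr
  have h2m : 2 * m = (n : ℤ) + 1 := by subst hm; omega
  have hno : (n : ℤ) % 2 = 1 := by omega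
  have hn0 : (0 : ℤ) < n := by omega
  have hσmem : ∀ x : ℤ, 1 ≤ x → x ≤ n → 1 ≤ σ x ∧ σ x ≤ n := by
    intro x h1 h2
    have := hσ.mapsTo (Set.mem_Icc.mpr ⟨h1, h2⟩)
    simpa [Set.mem_Icc] using this
  have hτmem : ∀ x : ℤ, 1 ≤ x → x ≤ n → 1 ≤ τ x ∧ τ x ≤ n := by
    intro x h1 h2
    have := hτ.mapsTo (Set.mem_Icc.mpr ⟨h1, h2⟩)
    simpa [Set.mem_Icc] using this
  have hME : ∀ iN jN : ℕ, M iN jN =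
      koch (n : ℤ) m (σ (cmap (n : ℤ) 0 ((iN : ℤ) + jN))) (τ (cmap (n : ℤ) m ((jN : ℤ) - iN))) := by
    intro iN jN
    rw [hM]
    by_cases h : Even ((iN : ℤ) + jN)
    · have h' : Even ((jN : ℤ) - iN) := by
        rw [Int.even_sub]; rw [Int.even_add] at h; tauto
      rw [if_pos h]; unfold cmap; rw [if_pos h, if_pos h', add_zero]
    · have h' : ¬ Even ((jN : ℤ) - iN) := by
        rw [Int.even_sub]; rw [Int.even_add] at h; tauto
      rw [if_neg h]; unfold cmap; rw [if_neg h, if_neg h', add_zero]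
  have hAmem : ∀ i j : ℤ, 1 ≤ i → i ≤ n → 1 ≤ j → j ≤ n →
      1 ≤ cmap (n : ℤ) 0 (i + j) ∧ cmap (n : ℤ) 0 (i + j) ≤ n :=
    fun i j h1 h2 h3 h4 => cmap_mem hn0 (fun _ => by omega)
  have hBmem : ∀ i j : ℤ, 1 ≤ i → i ≤ n → 1 ≤ j → j ≤ n →
      1 ≤ cmap (n : ℤ) m (j - i) ∧ cmap (n : ℤ) m (j - i) ≤ n :=
    fun i j h1 h2 h3 h4 => cmap_mem hn0 (fun _ => by omega)
  refine ⟨?_, ?_, ?_, ?_, ?_⟩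
  -- entries
  · apply map_val_eq_of
    · intro p hp q hq hpq
      simp only [Finset.coe_product, Set.mem_prod, Finset.mem_coe, Finset.mem_Icc] at hp hq
      obtain ⟨⟨hp11, hp12⟩, hp21, hp22⟩ := hp
      obtain ⟨⟨hq11, hq12⟩, hq21, hq22⟩ := hq
      have bp1 : (1 : ℤ) ≤ p.1 := by exact_mod_cast hp11
      have bp2 : (p.1 : ℤ) ≤ n := by exact_mod_cast hp12
      have bp3 : (1 : ℤ) ≤ p.2 := by exact_mod_cast hp21
      have bp4 : (p.2 : ℤ) ≤ n := by exact_mod_cast hp22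
      have bq1 : (1 : ℤ) ≤ q.1 := by exact_mod_cast hq11
      have bq2 : (q.1 : ℤ) ≤ n := by exact_mod_cast hq12
      have bq3 : (1 : ℤ) ≤ q.2 := by exact_mod_cast hq21
      have bq4 : (q.2 : ℤ) ≤ n := by exact_mod_cast hq22
      have hAp := hAmem _ _ bp1 bp2 bp3 bp4
      have hBp := hBmem _ _ bp1 bp2 bp3 bp4
      have hAq := hAmem _ _ bq1 bq2 bq3 bq4
      have hBq := hBmem _ _ bq1 bq2 bq3 bq4
      replace hpq : M p.1 p.2 = M q.1 q.2 := hpq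
      rw [hME, hME] at hpq
      have hkoch := koch_inj hn' h2m (hσmem _ hAp.1 hAp.2).1 (hσmem _ hAp.1 hAp.2).2
        (hσmem _ hAq.1 hAq.2).1 (hσmem _ hAq.1 hAq.2).2 hpq
      have hAeq : cmap (n : ℤ) 0 ((p.1 : ℤ) + p.2) = cmap (n : ℤ) 0 ((q.1 : ℤ) + q.2) :=
        hσ.injOn (Set.mem_Icc.mpr ⟨hAp.1, hAp.2⟩) (Set.mem_Icc.mpr ⟨hAq.1, hAq.2⟩) hkoch.1
      have hBeq : cmap (n : ℤ) m ((p.2 : ℤ) - p.1) = cmap (n : ℤ) m ((q.2 : ℤ) - q.1) :=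
        hτ.injOn (Set.mem_Icc.mpr ⟨hBp.1, hBp.2⟩) (Set.mem_Icc.mpr ⟨hBq.1, hBq.2⟩) hkoch.2
      have hψp := psi_left hn' hno h2m bp1 bp2 bp3 bp4
      have hψq := psi_left hn' hno h2m bq1 bq2 bq3 bq4
      rw [hAeq, hBeq] at hψp
      have e1 : (p.1 : ℤ) = q.1 := hψp.1.symm.trans hψq.1
      have e2 : (p.2 : ℤ) = q.2 := hψp.2.symm.trans hψq.2
      exact Prod.ext (by exact_mod_cast e1) (by exact_mod_cast e2)
    · intro p hp
      simp only [Finset.mem_coe, Finset.mem_product, Finset.mem_Icc] at hp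
      obtain ⟨⟨hp11, hp12⟩, hp21, hp22⟩ := hp
      have bp1 : (1 : ℤ) ≤ p.1 := by exact_mod_cast hp11
      have bp2 : (p.1 : ℤ) ≤ n := by exact_mod_cast hp12
      have bp3 : (1 : ℤ) ≤ p.2 := by exact_mod_cast hp21
      have bp4 : (p.2 : ℤ) ≤ n := by exact_mod_cast hp22
      have hAp := hAmem _ _ bp1 bp2 bp3 bp4
      have hBp := hBmem _ _ bp1 bp2 bp3 bp4
      rw [hME]
      have := koch_mem_sq hn' h2m (hσmem _ hAp.1 hAp.2).1 (hσmem _ hAp.1 hAp.2).2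
        (hτmem _ hBp.1 hBp.2).1 (hτmem _ hBp.1 hBp.2).2
      simpa [Finset.mem_Icc] using this
    · simp only [Int.card_Icc, Finset.card_product, Nat.card_Icc, Nat.add_sub_cancel]
      have : ((n : ℤ) ^ 2 + 1 - 1).toNat = n * n := by
        rw [show ((n : ℤ) ^ 2 + 1 - 1) = ((n * n : ℕ) : ℤ) by push_cast; ring,
          Int.toNat_natCast]
      rw [this]
  -- rows
  · intro i hi
    simp only [Finset.mem_Icc] at hi
    have bi1 : (1 : ℤ) ≤ i := by exact_mod_cast hi.1
    have bi2 : (i : ℤ) ≤ n := by exact_mod_cast hi.2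
    have hbijA : Set.BijOn (gmap (n : ℤ) i 0 1) (Set.Icc 1 (n : ℤ)) (Set.Icc 1 (n : ℤ)) :=
      gmap_bijOn hn' hno (Or.inl rfl) (fun x h1 h2 _ => by constructor <;> omega)
    have hbijB : Set.BijOn (gmap (n : ℤ) (-(i : ℤ)) m 1) (Set.Icc 1 (n : ℤ))
        (Set.Icc 1 (n : ℤ)) :=
      gmap_bijOn hn' hno (Or.inl rfl) (fun x h1 h2 _ => by constructor <;> omega)
    have hrow : rowList n M i = (List.range n).map (fun k : ℕ =>
        koch (n : ℤ) m ((fun x : ℤ => σ (gmap (n : ℤ) i 0 1 x)) ((k : ℤ) + 1))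
          ((fun x : ℤ => τ (gmap (n : ℤ) (-(i : ℤ)) m 1 x)) ((k : ℤ) + 1))) := by
      unfold rowList
      apply List.map_congr_left
      intro k _
      rw [hME i (k + 1)]
      have e1 : ((k + 1 : ℕ) : ℤ) = (k : ℤ) + 1 := by push_cast; ring
      rw [e1]
      simp only [gmap]
      rw [show (1 : ℤ) * ((k : ℤ) + 1) + (i : ℤ) = (i : ℤ) + ((k : ℤ) + 1) by ring,
        show (1 : ℤ) * ((k : ℤ) + 1) + (-(i : ℤ)) = ((k : ℤ) + 1) - (i : ℤ) by ring]
    rw [hrow]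
    exact line_res n hn m h2m (fun x : ℤ => σ (gmap (n : ℤ) i 0 1 x))
      (fun x : ℤ => τ (gmap (n : ℤ) (-(i : ℤ)) m 1 x))
      (fun x hx => by
        simp only [Finset.mem_Icc] at hx ⊢
        have h := hbijA.mapsTo (Set.mem_Icc.mpr hx)
        simp only [Set.mem_Icc] at h
        exact hσmem _ h.1 h.2)
      (sum_bijOn n m h2m (hσ.comp hbijA))
      (hτ.comp hbijB)
  -- columns
  · intro j hj
    simp only [Finset.mem_Icc] at hj
    have bj1 : (1 : ℤ) ≤ j := by exact_mod_cast hj.1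
    have bj2 : (j : ℤ) ≤ n := by exact_mod_cast hj.2
    have hbijA : Set.BijOn (gmap (n : ℤ) j 0 1) (Set.Icc 1 (n : ℤ)) (Set.Icc 1 (n : ℤ)) :=
      gmap_bijOn hn' hno (Or.inl rfl) (fun x h1 h2 _ => by constructor <;> omega)
    have hbijB : Set.BijOn (gmap (n : ℤ) j m (-1)) (Set.Icc 1 (n : ℤ))
        (Set.Icc 1 (n : ℤ)) :=
      gmap_bijOn hn' hno (Or.inr rfl) (fun x h1 h2 _ => by constructor <;> omega)
    have hcol : colList n M j = (List.range n).map (fun k : ℕ =>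
        koch (n : ℤ) m ((fun x : ℤ => σ (gmap (n : ℤ) j 0 1 x)) ((k : ℤ) + 1))
          ((fun x : ℤ => τ (gmap (n : ℤ) j m (-1) x)) ((k : ℤ) + 1))) := by
      unfold colList
      apply List.map_congr_left
      intro k _
      rw [hME (k + 1) j]
      have e1 : ((k + 1 : ℕ) : ℤ) = (k : ℤ) + 1 := by push_cast; ring
      rw [e1]
      simp only [gmap]
      rw [show (1 : ℤ) * ((k : ℤ) + 1) + (j : ℤ) = ((k : ℤ) + 1) + (j : ℤ) by ring,
        show (-1 : ℤ) * ((k : ℤ) + 1) + (j : ℤ) = (j : ℤ) - ((k : ℤ) + 1) by ring]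
    rw [hcol]
    exact line_res n hn m h2m (fun x : ℤ => σ (gmap (n : ℤ) j 0 1 x))
      (fun x : ℤ => τ (gmap (n : ℤ) j m (-1) x))
      (fun x hx => by
        simp only [Finset.mem_Icc] at hx ⊢
        have h := hbijA.mapsTo (Set.mem_Icc.mpr hx)
        simp only [Set.mem_Icc] at h
        exact hσmem _ h.1 h.2)
      (sum_bijOn n m h2m (hσ.comp hbijA))
      (hτ.comp hbijB)
  -- diagonal
  · have hdiag : diagList n M = (List.range n).map (fun k : ℕ =>
        koch (n : ℤ) m (σ ((k : ℤ) + 1)) m) := by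
      unfold diagList
      apply List.map_congr_left
      intro k _
      rw [hME (k + 1) (k + 1)]
      have e1 : ((k + 1 : ℕ) : ℤ) = (k : ℤ) + 1 := by push_cast; ring
      rw [e1]
      have c1 : cmap (n : ℤ) 0 (((k : ℤ) + 1) + ((k : ℤ) + 1)) = (k : ℤ) + 1 := by
        unfold cmap
        rw [if_pos ⟨(k : ℤ) + 1, rfl⟩]
        omega
      have c2 : cmap (n : ℤ) m (((k : ℤ) + 1) - ((k : ℤ) + 1)) = m := by
        unfold cmap
        rw [show ((k : ℤ) + 1) - ((k : ℤ) + 1) = 0 by ring, if_pos Even.zero]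
        omega
      rw [c1, c2, hτm]
    rw [hdiag]
    exact diag_res n hn m h2m σ hσ
  -- antidiagonal
  · have hρτ : Set.BijOn (fun x : ℤ => τ ((n : ℤ) + 1 - x)) (Set.Icc 1 (n : ℤ))
        (Set.Icc 1 (n : ℤ)) := by
      apply hτ.comp
      have hmt : Set.MapsTo (fun x : ℤ => (n : ℤ) + 1 - x) (Set.Icc 1 (n : ℤ))
          (Set.Icc 1 (n : ℤ)) := by
        intro x hx; simp only [Set.mem_Icc] at hx ⊢; omega
      exact Set.InvOn.bijOn ⟨fun x _ => by simp, fun x _ => by simp⟩ hmt hmt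
    have hadiag : adiagList n M = (List.range n).map (fun k : ℕ =>
        koch (n : ℤ) m ((fun _ : ℤ => m) ((k : ℤ) + 1))
          ((fun x : ℤ => τ ((n : ℤ) + 1 - x)) ((k : ℤ) + 1))) := by
      unfold adiagList
      apply List.map_congr_left
      intro k hk
      simp only [List.mem_range] at hk
      rw [hME (k + 1) (n - k)]
      have e1 : ((k + 1 : ℕ) : ℤ) = (k : ℤ) + 1 := by push_cast; ring
      have e2 : ((n - k : ℕ) : ℤ) = (n : ℤ) - k := by
        have hkn : k ≤ n := by omega
        push_cast [hkn]; ring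
      rw [e1, e2]
      have c1 : cmap (n : ℤ) 0 (((k : ℤ) + 1) + ((n : ℤ) - (k : ℤ))) = m := by
        unfold cmap
        rw [show ((k : ℤ) + 1) + ((n : ℤ) - (k : ℤ)) = (n : ℤ) + 1 by ring,
          if_pos ⟨m, by omega⟩]
        omega
      have c2 : cmap (n : ℤ) m (((n : ℤ) - (k : ℤ)) - ((k : ℤ) + 1)) = (n : ℤ) - k := by
        unfold cmap
        rw [if_pos ⟨m - 1 - (k : ℤ), by omega⟩]
        omega
      rw [c1, c2, hσm]
      rw [show (n : ℤ) - (k : ℤ) = (n : ℤ) + 1 - ((k : ℤ) + 1) by ring]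
    rw [hadiag]
    refine line_res n hn m h2m (fun _ => m) (fun x => τ ((n : ℤ) + 1 - x)) ?_ ?_ hρτ
    · intro x _; simp only [Finset.mem_Icc]; omega
    · rw [Finset.sum_const, Int.card_Icc]
      have hc : ((n : ℤ) + 1 - 1).toNat = n := by omega
      rw [hc, nsmul_eq_mul]
end mainres
end
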